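/- arXiv:2006.14443 — 8 statements merged into one kernel-verified Lean document; each statement's English description precedes it below -/
import Mathlib

section
/- Let α be a flow on a C*-algebra B and A an α-regular subalgebra. A trace state τ on A satisfying τ(b b*) = τ(b* α_{iβ}(b)) for all (A,α)-normalizers b also satisfies the a priori stronger conformality condition τ(b a b* c) = τ(a b* c α_{iβ}(b)) for all a, c ∈ A and all (A,α)-normalizers b. -/
/-!
Put `G = F(iβ)` and `Φ(p, q) = τ(b p b* q) - τ(p b* q G)`, a continuous bilinear form once `τ` is
extended to `B` by Hahn–Banach. For `d, e ∈ A` the element `d b e` is again a normalizer, with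
entire extension `d F e`, and the trace property turns the weak condition for `d b e` into
`Φ(e e*, d* d) = 0`. Polarization in each variable gives `Φ(x y*, v w*) = 0` for `x, y, v, w ∈ A`,
and since `x uᵢ* → x` for an approximate unit `uᵢ ∈ A`, `Φ` vanishes on `A × A`.
That `b* x F(z)` lies in `A` follows from the real axis by analytic continuation, `A` being closed.
-/

open Filter Topology

lemma Complex.frequently_mem_range_ofReal_nhdsNE_zero :
    ∃ᶠ z in 𝓝[≠] (0 : ℂ), z ∈ Set.range Complex.ofReal := by
  have h : Tendsto Complex.ofReal (𝓝[≠] 0) (𝓝[≠] 0) :=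
    tendsto_nhdsWithin_of_tendsto_nhds_of_eventually_within _
      ((Complex.continuous_ofReal.tendsto' 0 0 Complex.ofReal_zero).mono_left nhdsWithin_le_nhds)
      (eventually_nhdsWithin_of_forall fun t ht => by simpa using ht)
  exact h.frequently (Frequently.of_forall fun t => ⟨t, rfl⟩)

lemma Submodule.apply_mem_of_differentiable_of_forall_ofReal_mem {E : Type*}
    [NormedAddCommGroup E] [NormedSpace ℂ E] (S : Submodule ℂ E) [IsClosed (S : Set E)]
    {g : ℂ → E} (hg : Differentiable ℂ g) (hreal : ∀ t : ℝ, g t ∈ S) (z : ℂ) : g z ∈ S := by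
  rw [← Submodule.Quotient.mk_eq_zero]
  refine SeparatingDual.eq_zero_of_forall_dual_eq_zero (R := ℂ) fun φ => ?_
  have hana : AnalyticOnNhd ℂ (φ ∘ S.mkQL ∘ g) Set.univ :=
    Complex.analyticOnNhd_univ_iff_differentiable.mpr ((φ.comp S.mkQL).differentiable.comp hg)
  refine hana.eqOn_zero_of_preconnected_of_frequently_eq_zero isPreconnected_univ
    (Set.mem_univ 0) ?_ (Set.mem_univ z)
  refine Complex.frequently_mem_range_ofReal_nhdsNE_zero.mono ?_
  rintro _ ⟨t, rfl⟩
  simp [(Submodule.Quotient.mk_eq_zero S).mpr (hreal t)]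

lemma LinearMap.map_mul_star_eq_zero_of_forall_mul_star_self {B E : Type*} [NonUnitalRing B]
    [StarRing B] [Module ℂ B] [StarModule ℂ B] [IsScalarTower ℂ B B] [SMulCommClass ℂ B B]
    [AddCommGroup E] [Module ℂ E] (S : Submodule ℂ B) (L : B →ₗ[ℂ] E)
    (h : ∀ e ∈ S, L (e * star e) = 0) {x y : B} (hx : x ∈ S) (hy : y ∈ S) :
    L (x * star y) = 0 := by
  have expand : ∀ c : ℂ, L ((x + c • y) * star (x + c • y)) = L (x * star x) +
      star c • L (x * star y) + c • L (y * star x) + (c * star c) • L (y * star y) := by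
    intro c
    simp only [star_add, star_smul, mul_add, add_mul, smul_mul_assoc, mul_smul_comm,
      map_add, map_smul]
    module
  have hc (c : ℂ) : L ((x + c • y) * star (x + c • y)) = 0 :=
    h _ (S.add_mem hx (S.smul_mem c hy))
  have h1 := (expand 1).symm.trans (hc 1)
  have h2 := (expand (-1)).symm.trans (hc (-1))
  have h3 := (expand Complex.I).symm.trans (hc Complex.I)
  have h4 := (expand (-Complex.I)).symm.trans (hc (-Complex.I))
  simp only [star_one, star_neg, Complex.star_def, Complex.conj_I, neg_neg, one_smul, mul_one,
    neg_smul, mul_neg, neg_mul, Complex.I_mul_I] at h1 h2 h3 h4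
  linear_combination (norm := match_scalars <;> ring_nf <;> simp [Complex.I_sq])
    ((1 : ℂ) / 4) • (h1 - h2 + Complex.I • (h3 - h4))

lemma ContinuousLinearMap.apply_eq_zero_of_forall_mul_star_self {B E : Type*} [Ring B]
    [TopologicalSpace B] [StarRing B] [Algebra ℂ B] [StarModule ℂ B] [AddCommGroup E]
    [Module ℂ E] [TopologicalSpace E] [T2Space E] {A : StarSubalgebra ℂ B}
    {ι : Type*} {l : Filter ι} [l.NeBot] {u : ι → B} (hu : ∀ i, u i ∈ A)
    (hlim : ∀ x, Tendsto (fun i => x * u i) l (𝓝 x)) (L : B →L[ℂ] E)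
    (h : ∀ e ∈ A, L (e * star e) = 0) {a : B} (ha : a ∈ A) : L a = 0 := by
  have hpol : ∀ x ∈ A, ∀ y ∈ A, L (x * star y) = 0 := fun x hx y hy =>
    (L : B →ₗ[ℂ] E).map_mul_star_eq_zero_of_forall_mul_star_self A.toSubalgebra.toSubmodule h
      hx hy
  refine (isClosed_eq L.continuous continuous_const).mem_of_tendsto (hlim a)
    (Eventually.of_forall fun i => ?_)
  simpa using hpol a ha _ (star_mem (hu i))

lemma ContinuousLinearMap.apply_apply_eq_zero_of_forall_mul_star_self {B E : Type*}
    [NormedRing B] [StarRing B] [NormedAlgebra ℂ B] [StarModule ℂ B] [NormedAddCommGroup E]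
    [NormedSpace ℂ E] {A : StarSubalgebra ℂ B}
    {ι : Type*} {l : Filter ι} [l.NeBot] {u : ι → B} (hu : ∀ i, u i ∈ A)
    (hlim : ∀ x, Tendsto (fun i => x * u i) l (𝓝 x)) (Φ : B →L[ℂ] B →L[ℂ] E)
    (h : ∀ d ∈ A, ∀ e ∈ A, Φ (e * star e) (star d * d) = 0) {a c : B} (ha : a ∈ A)
    (hc : c ∈ A) : Φ a c = 0 := by
  have hleft (d : B) (hd : d ∈ A) : Φ a (star d * d) = 0 :=
    (Φ.flip (star d * d)).apply_eq_zero_of_forall_mul_star_self hu hlim (h d hd) ha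
  exact (Φ a).apply_eq_zero_of_forall_mul_star_self hu hlim
    (fun e he => by simpa using hleft (star e) (star_mem he)) hc

section Normalizer

variable {B : Type*} [NormedRing B] [StarRing B] [NormedAlgebra ℂ B]

noncomputable def conformalDefect (T : B →L[ℂ] ℂ) (b G : B) : B →L[ℂ] B →L[ℂ] ℂ :=
  LinearMap.mkContinuous₂
    (LinearMap.mk₂ ℂ (fun p q => T (b * p * star b * q) - T (p * star b * q * G))
      (fun _ _ _ => by simp only [mul_add, add_mul, map_add]; ring)
      (fun _ _ _ => by simp only [mul_smul_comm, smul_mul_assoc, map_smul, smul_sub])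
      (fun _ _ _ => by simp only [mul_add, add_mul, map_add]; ring)
      (fun _ _ _ => by simp only [mul_smul_comm, smul_mul_assoc, map_smul, smul_sub]))
    (‖T‖ * (‖b‖ * ‖star b‖ + ‖star b‖ * ‖G‖)) fun p q => by
      have hnorm : ∀ w x y z : B, ‖w * x * y * z‖ ≤ ‖w‖ * ‖x‖ * ‖y‖ * ‖z‖ := fun w x y z =>
        (norm_mul_le _ _).trans (by gcongr; exact norm_mul₃_le)
      calc ‖T (b * p * star b * q) - T (p * star b * q * G)‖
          ≤ ‖T‖ * ‖b * p * star b * q‖ + ‖T‖ * ‖p * star b * q * G‖ :=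
            (norm_sub_le _ _).trans (add_le_add (T.le_opNorm _) (T.le_opNorm _))
        _ ≤ ‖T‖ * (‖b‖ * ‖p‖ * ‖star b‖ * ‖q‖) + ‖T‖ * (‖p‖ * ‖star b‖ * ‖q‖ * ‖G‖) := by
            gcongr <;> apply hnorm
        _ = ‖T‖ * (‖b‖ * ‖star b‖ + ‖star b‖ * ‖G‖) * ‖p‖ * ‖q‖ := by ring

lemma conformalDefect_apply (T : B →L[ℂ] ℂ) (b G p q : B) :
    conformalDefect T b G p q = T (b * p * star b * q) - T (p * star b * q * G) := rfl

variable [StarModule ℂ B]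

/-- The algebraic half of being an `(A, α)`-normalizer; analyticity is carried separately by an
entire extension `F` of `t ↦ α t b`. -/
def IsFlowNormalizer (α : ℝ → B →⋆ₐ[ℂ] B) (A : StarSubalgebra ℂ B) (b : B) : Prop :=
  ∀ t : ℝ, ∀ x ∈ A, α t b * x * star b ∈ A ∧ star b * x * α t b ∈ A

variable {α : ℝ → B →⋆ₐ[ℂ] B} {A : StarSubalgebra ℂ B} {b x : B}

lemma apply_mul_mul_of_forall_apply_eq (hfix : ∀ t : ℝ, ∀ x ∈ A, α t x = x) {d e : B}
    (hd : d ∈ A) (he : e ∈ A) (t : ℝ) : α t (d * b * e) = d * α t b * e := by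
  rw [map_mul, map_mul, hfix t d hd, hfix t e he]

namespace IsFlowNormalizer

lemma mul_mul_star_mem (hα0 : α 0 = StarAlgHom.id ℂ B) (hb : IsFlowNormalizer α A b)
    (hx : x ∈ A) : b * x * star b ∈ A := by
  simpa [hα0] using (hb 0 x hx).1

lemma star_mul_mul_mem (hA : IsClosed (A : Set B)) (hb : IsFlowNormalizer α A b) {F : ℂ → B}
    (hF : Differentiable ℂ F) (hFα : ∀ t : ℝ, F t = α t b) (hx : x ∈ A) (z : ℂ) :
    star b * x * F z ∈ A := by
  have : IsClosed (A.toSubalgebra.toSubmodule : Set B) := hA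
  refine A.toSubalgebra.toSubmodule.apply_mem_of_differentiable_of_forall_ofReal_mem
    (hF.const_mul _) (fun t => ?_) z
  rw [hFα]
  exact (hb t x hx).2

lemma mul_mul (hfix : ∀ t : ℝ, ∀ x ∈ A, α t x = x) (hb : IsFlowNormalizer α A b) {d e : B}
    (hd : d ∈ A) (he : e ∈ A) : IsFlowNormalizer α A (d * b * e) := by
  intro t x hx
  simp only [apply_mul_mul_of_forall_apply_eq hfix hd he, star_mul]
  constructor
  · have h := (hb t _ (mul_mem (mul_mem he hx) (star_mem he))).1
    simpa only [mul_assoc] using mul_mem (mul_mem hd h) (star_mem hd)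
  · have h := (hb t _ (mul_mem (mul_mem (star_mem hd) hx) hd)).2
    simpa only [mul_assoc] using mul_mem (mul_mem (star_mem he) h) he

end IsFlowNormalizer

lemma conformalDefect_mul_star_self_star_mul_self {T : B →L[ℂ] ℂ}
    (htrace : ∀ x ∈ A, ∀ y ∈ A, T (x * y) = T (y * x)) {G d e : B} (hd : d ∈ A) (he : e ∈ A)
    (hM : b * (e * star e) * star b ∈ A) (hY : star b * (star d * d) * G ∈ A) :
    conformalDefect T b G (e * star e) (star d * d) =
      T (d * b * e * star (d * b * e)) - T (star (d * b * e) * (d * G * e)) := by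
  have h₁ : T (b * (e * star e) * star b * (star d * d)) = T (d * b * e * star (d * b * e)) :=
    calc _ = T (b * (e * star e) * star b * star d * d) := by simp only [mul_assoc]
      _ = T (d * (b * (e * star e) * star b * star d)) := htrace _ (mul_mem hM (star_mem hd)) _ hd
      _ = _ := by simp only [star_mul, mul_assoc]
  have h₂ : T (e * star e * star b * (star d * d) * G) = T (star (d * b * e) * (d * G * e)) :=
    calc _ = T (e * (star e * (star b * (star d * d) * G))) := by simp only [mul_assoc]
      _ = T (star e * (star b * (star d * d) * G) * e) :=
          htrace _ he _ (mul_mem (star_mem he) hY)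
      _ = _ := by simp only [star_mul, mul_assoc]
  rw [conformalDefect_apply, h₁, h₂]

lemma IsFlowNormalizer.conformalDefect_mul_star_self_star_mul_self_eq_zero
    (hα0 : α 0 = StarAlgHom.id ℂ B) (hA : IsClosed (A : Set B))
    (hfix : ∀ t : ℝ, ∀ x ∈ A, α t x = x) {T : B →L[ℂ] ℂ}
    (htrace : ∀ x ∈ A, ∀ y ∈ A, T (x * y) = T (y * x)) {z : ℂ}
    (hweak : ∀ b' : B, ∀ F' : ℂ → B, IsFlowNormalizer α A b' → Differentiable ℂ F' →
      (∀ t : ℝ, F' t = α t b') → T (b' * star b') = T (star b' * F' z))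
    (hb : IsFlowNormalizer α A b) {F : ℂ → B} (hF : Differentiable ℂ F)
    (hFα : ∀ t : ℝ, F t = α t b) {d e : B} (hd : d ∈ A) (he : e ∈ A) :
    conformalDefect T b (F z) (e * star e) (star d * d) = 0 := by
  rw [conformalDefect_mul_star_self_star_mul_self htrace hd he
    (hb.mul_mul_star_mem hα0 (mul_mem he (star_mem he)))
    (hb.star_mul_mul_mem hA hF hFα (mul_mem (star_mem hd) hd) z), sub_eq_zero]
  refine hweak _ (fun w => d * F w * e) (hb.mul_mul hfix hd he)
    ((hF.const_mul d).mul_const e) fun t => ?_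
  rw [apply_mul_mul_of_forall_apply_eq hfix hd he, hFα]

end Normalizer

theorem stmt2_general {B : Type*} [NormedRing B] [StarRing B]
    [NormedAlgebra ℂ B] [StarModule ℂ B]
    -- the flow
    (α : ℝ → (B →⋆ₐ[ℂ] B))
    (hα0 : α 0 = StarAlgHom.id ℂ B)
    -- the subalgebra
    (A : StarSubalgebra ℂ B) (hAclosed : IsClosed (A : Set B))
    -- the set of (A,α)-normalizers
    (Nα : Set B)
    (hNα : Nα = {b : B | (∃ F : ℂ → B, Differentiable ℂ F ∧ ∀ t : ℝ, F (t : ℂ) = α t b) ∧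
      ∀ t : ℝ, ∀ x ∈ A, (α t b * x * star b ∈ A ∧ star b * x * α t b ∈ A)})
    -- α-regularity: A contains an approximate unit for B,
    (happrox : ∃ (ι : Type) (l : Filter ι) (e : ι → B), l.NeBot ∧ (∀ i, e i ∈ A) ∧
      ∀ x : B, Tendsto (fun i => e i * x) l (𝓝 x) ∧ Tendsto (fun i => x * e i) l (𝓝 x))
    -- A lies in the fixed-point algebra of α,
    (hAfix : ∀ t : ℝ, ∀ x ∈ A, α t x = x)
    -- τ is a trace state on A
    (τ : ↥A →L[ℂ] ℂ)
    (hτtrace : ∀ x y : ↥A, τ (x * y) = τ (y * x))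
    (β : ℝ)
    -- the weak KMS-type condition τ(b b*) = τ(b* α_{iβ}(b))
    (hweak : ∀ b ∈ Nα, ∀ F : ℂ → B, Differentiable ℂ F → (∀ t : ℝ, F (t : ℂ) = α t b) →
      ∀ (h₁ : b * star b ∈ A) (h₂ : star b * F (Complex.I * β) ∈ A),
        τ ⟨b * star b, h₁⟩ = τ ⟨star b * F (Complex.I * β), h₂⟩) :
    -- the conclusion: full conformality
    ∀ b ∈ Nα, ∀ F : ℂ → B, Differentiable ℂ F → (∀ t : ℝ, F (t : ℂ) = α t b) →
      ∀ a c : ↥A,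
      ∀ (h₁ : b * (a : B) * star b * (c : B) ∈ A)
        (h₂ : (a : B) * star b * (c : B) * F (Complex.I * β) ∈ A),
        τ ⟨b * (a : B) * star b * (c : B), h₁⟩ =
          τ ⟨(a : B) * star b * (c : B) * F (Complex.I * β), h₂⟩ := by
  subst hNα
  intro b ⟨_, (hb : IsFlowNormalizer α A b)⟩ F hF hFα a c h₁ h₂
  obtain ⟨T, hT, -⟩ := exists_extension_norm_eq A.toSubalgebra.toSubmodule τ
  have hTτ (x : B) (hx : x ∈ A) : T x = τ ⟨x, hx⟩ := hT ⟨x, hx⟩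
  have htrace : ∀ x ∈ A, ∀ y ∈ A, T (x * y) = T (y * x) := fun x hx y hy => by
    rw [hTτ _ (mul_mem hx hy), hTτ _ (mul_mem hy hx)]
    exact hτtrace ⟨x, hx⟩ ⟨y, hy⟩
  have hweakT : ∀ b' : B, ∀ F' : ℂ → B, IsFlowNormalizer α A b' → Differentiable ℂ F' →
      (∀ t : ℝ, F' t = α t b') → T (b' * star b') = T (star b' * F' (Complex.I * β)) := by
    intro b' F' hb' hF' hF'α
    have h₁' : b' * star b' ∈ A := by simpa using hb'.mul_mul_star_mem hα0 (one_mem A)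
    have h₂' : star b' * F' (Complex.I * β) ∈ A := by
      simpa using hb'.star_mul_mul_mem hAclosed hF' hF'α (one_mem A) _
    rw [hTτ _ h₁', hTτ _ h₂']
    exact hweak b' ⟨⟨F', hF', hF'α⟩, hb'⟩ F' hF' hF'α h₁' h₂'
  have hΦ : ∀ d ∈ A, ∀ e ∈ A,
      conformalDefect T b (F (Complex.I * β)) (e * star e) (star d * d) = 0 := fun d hd e he =>
    hb.conformalDefect_mul_star_self_star_mul_self_eq_zero hα0 hAclosed hAfix htrace hweakT hF hFα
      hd he
  obtain ⟨ι, l, u, hl, hu, hlim⟩ := happrox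
  have hac : conformalDefect T b (F (Complex.I * β)) a c = 0 :=
    ContinuousLinearMap.apply_apply_eq_zero_of_forall_mul_star_self hu (fun x => (hlim x).2) _
      hΦ a.2 c.2
  rw [← hTτ _ h₁, ← hTτ _ h₂, ← sub_eq_zero]
  simpa [conformalDefect_apply, mul_assoc] using hac

/-- Let `α` be a flow on a C*-algebra `B` and `A` an `α`-regular subalgebra.
A trace state `τ` on `A` satisfying `τ (b b*) = τ (b* α_{iβ}(b))` for all
`(A,α)`-normalizers `b` also satisfies the a priori stronger conformality condition
`τ (b a b* c) = τ (a b* c α_{iβ}(b))` for all `a, c ∈ A` and all `(A,α)`-normalizers `b`. -/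
theorem stmt2 {B : Type*} [NormedRing B] [StarRing B] [CStarRing B]
    [NormedAlgebra ℂ B] [CompleteSpace B] [StarModule ℂ B]
    -- the flow
    (α : ℝ → (B →⋆ₐ[ℂ] B))
    (hα0 : α 0 = StarAlgHom.id ℂ B)
    (hαadd : ∀ s t : ℝ, (α (s + t)) = (α s).comp (α t))
    (hαcont : ∀ x : B, Continuous fun t => α t x)
    -- the subalgebra
    (A : StarSubalgebra ℂ B) (hAclosed : IsClosed (A : Set B))
    -- the set of (A,α)-normalizers
    (Nα : Set B)
    (hNα : Nα = {b : B | (∃ F : ℂ → B, Differentiable ℂ F ∧ ∀ t : ℝ, F (t : ℂ) = α t b) ∧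
      ∀ t : ℝ, ∀ x ∈ A, (α t b * x * star b ∈ A ∧ star b * x * α t b ∈ A)})
    -- α-regularity: A contains an approximate unit for B,
    (happrox : ∃ (ι : Type) (l : Filter ι) (e : ι → B), l.NeBot ∧ (∀ i, e i ∈ A) ∧
      ∀ x : B, Tendsto (fun i => e i * x) l (𝓝 x) ∧ Tendsto (fun i => x * e i) l (𝓝 x))
    -- A lies in the fixed-point algebra of α,
    (hAfix : ∀ t : ℝ, ∀ x ∈ A, α t x = x)
    -- and B is the closed linear span of the normalizers.
    (hgen : (Submodule.span ℂ Nα).topologicalClosure = ⊤)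
    -- τ is a trace state on A
    (τ : ↥A →L[ℂ] ℂ) (hτnorm : ‖τ‖ = 1)
    (hτpos : ∀ x : ↥A, 0 ≤ (τ (star x * x)).re ∧ (τ (star x * x)).im = 0)
    (hτtrace : ∀ x y : ↥A, τ (x * y) = τ (y * x))
    (β : ℝ)
    -- the weak KMS-type condition τ(b b*) = τ(b* α_{iβ}(b))
    (hweak : ∀ b ∈ Nα, ∀ F : ℂ → B, Differentiable ℂ F → (∀ t : ℝ, F (t : ℂ) = α t b) →
      ∀ (h₁ : b * star b ∈ A) (h₂ : star b * F (Complex.I * β) ∈ A),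
        τ ⟨b * star b, h₁⟩ = τ ⟨star b * F (Complex.I * β), h₂⟩) :
    -- the conclusion: full conformality
    ∀ b ∈ Nα, ∀ F : ℂ → B, Differentiable ℂ F → (∀ t : ℝ, F (t : ℂ) = α t b) →
      ∀ a c : ↥A,
      ∀ (h₁ : b * (a : B) * star b * (c : B) ∈ A)
        (h₂ : (a : B) * star b * (c : B) * F (Complex.I * β) ∈ A),
        τ ⟨b * (a : B) * star b * (c : B), h₁⟩ =
          τ ⟨(a : B) * star b * (c : B) * F (Complex.I * β), h₂⟩ :=
  stmt2_general α hα0 A hAclosed Nα hNα happrox hAfix τ hτtrace β hweak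
end

section
/- Let A be a unital C*-algebra with a G-action γ and cocycle D as above, let β ∈ ℝ, and let ω be a β-KMS state on A ⋊_γ G for the flow α^D. Then (a) ω restricted to A is a tracial state, and (b) ω(γ_g(a)) = ω(a e^{β D_g}) for all a ∈ A and g ∈ G. -/
/-!
Both statements are instances of the KMS condition. With `g = h = 1` the unitary `u 1` is `1`
and the cocycle identity forces `D 1 = 0`, so the weight `e^{β D_1}` disappears and the condition
reads `ω (a b) = ω (b a)`. With `a = 1` and `h = g⁻¹` we have `u g⁻¹ = (u g)⋆`, so the left side is
`ω (u_g b u_g⋆) = ω (γ_g b)` and the right side collapses to `ω (b e^{β D_g})`.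
-/

section UnitaryFamily

variable {G R : Type*} [Group G] [Monoid R] [StarMul R]

def unitaryHomOfMul (u : G → R) (hu_unitary : ∀ g, u g ∈ unitary R)
    (hu_mul : ∀ g h, u g * u h = u (g * h)) : G →* unitary R :=
  MonoidHom.mk' (fun g => ⟨u g, hu_unitary g⟩) fun g h => Subtype.ext (hu_mul g h).symm

theorem map_one_of_mul_of_mem_unitary {u : G → R} (hu_unitary : ∀ g, u g ∈ unitary R)
    (hu_mul : ∀ g h, u g * u h = u (g * h)) : u 1 = 1 :=
  congrArg Subtype.val (map_one (unitaryHomOfMul u hu_unitary hu_mul))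

theorem star_eq_map_inv_of_mul_of_mem_unitary {u : G → R} (hu_unitary : ∀ g, u g ∈ unitary R)
    (hu_mul : ∀ g h, u g * u h = u (g * h)) (g : G) : star (u g) = u g⁻¹ :=
  congrArg Subtype.val (map_inv (unitaryHomOfMul u hu_unitary hu_mul) g).symm

end UnitaryFamily

theorem map_one_eq_zero_of_cocycle {G M F : Type*} [Group G] [AddGroup M] [EquivLike F M M]
    [AddEquivClass F M M] (γ : G → F) {D : G → M}
    (hD : ∀ g h : G, γ h⁻¹ (D g) + D h = D (g * h)) : D 1 = 0 := by
  have h := hD 1 1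
  rwa [inv_one, one_mul, add_eq_right, EmbeddingLike.map_eq_zero_iff] at h

theorem stmt5_general {A : Type*} [NormedRing A] [StarRing A]
    [NormedAlgebra ℂ A]
    {G : Type*} [Group G]
    (γ : G → (A ≃⋆ₐ[ℂ] A))
    (D : G → A)
    (hDcocycle : ∀ g h : G, γ h⁻¹ (D g) + D h = D (g * h))
    -- the crossed product B = A ⋊_γ G
    {B : Type*} [NormedRing B] [StarRing B]
    [NormedAlgebra ℂ B]
    (ι : A →⋆ₐ[ℂ] B) (u : G → B)
    (hu_mul : ∀ g h : G, u g * u h = u (g * h))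
    (hu_unitary : ∀ g : G, star (u g) * u g = 1 ∧ u g * star (u g) = 1)
    (hu_cov : ∀ (g : G) (a : A), u g * ι a * star (u g) = ι (γ g a))
    (β : ℝ)
    -- ω is a state on B
    (ω : B →L[ℂ] ℂ)
    -- the β-KMS condition for α^D
    (hKMS : ∀ (a b : A) (g h : G),
      ω (ι a * u g * (ι b * u h)) =
        ω (ι b * u h * (ι a * u g) * ι (NormedSpace.exp ((β : ℂ) • D g)))) :
    -- (a) ω|_A is tracial
    (∀ a b : A, ω (ι (a * b)) = ω (ι (b * a))) ∧
    -- (b) ω(γ_g(a)) = ω(a e^{β D_g})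
    (∀ (a : A) (g : G),
      ω (ι (γ g a)) = ω (ι (a * NormedSpace.exp ((β : ℂ) • D g)))) := by
  have hu_one : u 1 = 1 := map_one_of_mul_of_mem_unitary hu_unitary hu_mul
  have hu_star : ∀ g, star (u g) = u g⁻¹ := star_eq_map_inv_of_mul_of_mem_unitary hu_unitary hu_mul
  have hexp_one : NormedSpace.exp ((β : ℂ) • D 1) = 1 := by
    rw [map_one_eq_zero_of_cocycle γ hDcocycle, smul_zero, NormedSpace.exp_zero]
  refine ⟨fun a b => ?_, fun a g => ?_⟩
  · simpa only [map_mul, hu_one, hexp_one, map_one, mul_one] using hKMS a b 1 1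
  · have h := hKMS 1 a g g⁻¹
    rwa [map_one, one_mul, ← hu_star g, ← mul_assoc, hu_cov, mul_assoc (ι a),
      (hu_unitary g).1, mul_one, ← map_mul] at h

/-- Let `A` be a unital C*-algebra with a `G`-action `γ` and cocycle `D` as
above, `β ∈ ℝ`, and `ω` a `β`-KMS state on `A ⋊_γ G` for the flow `α^D` (expressed via the
equivalent condition `ω (a u_g b u_h) = ω (b u_h a u_g e^{β D_g})`).  Then
(a) `ω` restricted to (the copy of) `A` is a tracial state, and
(b) `ω (γ_g a) = ω (a e^{β D_g})` for all `a ∈ A` and `g ∈ G`. -/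
theorem stmt5 {A : Type*} [NormedRing A] [StarRing A] [CStarRing A]
    [NormedAlgebra ℂ A] [CompleteSpace A] [StarModule ℂ A]
    {G : Type*} [Group G] [Countable G]
    (γ : G → (A ≃⋆ₐ[ℂ] A))
    (hγ1 : ∀ x : A, γ 1 x = x)
    (hγmul : ∀ (g h : G) (x : A), γ (g * h) x = γ g (γ h x))
    (D : G → A)
    (hDsa : ∀ g, star (D g) = D g)
    (hDcentral : ∀ g, ∀ x : A, D g * x = x * D g)
    (hDcocycle : ∀ g h : G, γ h⁻¹ (D g) + D h = D (g * h))
    -- the crossed product B = A ⋊_γ G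
    {B : Type*} [NormedRing B] [StarRing B] [CStarRing B]
    [NormedAlgebra ℂ B] [CompleteSpace B] [StarModule ℂ B]
    (ι : A →⋆ₐ[ℂ] B) (u : G → B)
    (hu_mul : ∀ g h : G, u g * u h = u (g * h))
    (hu_unitary : ∀ g : G, star (u g) * u g = 1 ∧ u g * star (u g) = 1)
    (hu_cov : ∀ (g : G) (a : A), u g * ι a * star (u g) = ι (γ g a))
    (β : ℝ)
    -- ω is a state on B
    (ω : B →L[ℂ] ℂ) (hω1 : ω 1 = 1)
    (hωpos : ∀ x : B, 0 ≤ (ω (star x * x)).re ∧ (ω (star x * x)).im = 0)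
    -- the β-KMS condition for α^D
    (hKMS : ∀ (a b : A) (g h : G),
      ω (ι a * u g * (ι b * u h)) =
        ω (ι b * u h * (ι a * u g) * ι (NormedSpace.exp ((β : ℂ) • D g)))) :
    -- (a) ω|_A is tracial
    (∀ a b : A, ω (ι (a * b)) = ω (ι (b * a))) ∧
    -- (b) ω(γ_g(a)) = ω(a e^{β D_g})
    (∀ (a : A) (g : G),
      ω (ι (γ g a)) = ω (ι (a * NormedSpace.exp ((β : ℂ) • D g)))) :=
  stmt5_general γ D hDcocycle ι u hu_mul hu_unitary hu_cov β ω hKMS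
end

section
/- Let A be a unital C*-algebra with G-action γ and cocycle D, let τ be a tracial state on A, and let P : A ⋊_γ G → A be the canonical conditional expectation with P(a u_g) = 0 for g ≠ e and P(a) = a. Then τ ∘ P is a β-KMS state for α^D if and only if τ(γ_g(a)) = τ(a e^{β D_g}) for all a ∈ A and g ∈ G. -/
/-!
On the spanning elements `a u_g`, `b u_h` both sides of the KMS condition are of the form
`τ (P (x u_k))` with `k = gh` resp. `k = hg`, so both vanish unless `h = g⁻¹`. For `h = g⁻¹`
the left side is `τ (a γ_g b)` and the right side is `τ (b γ_{g⁻¹}(a) e^{β D_g})`; by the trace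
property and `γ_g γ_{g⁻¹} = id` the former equals `τ (γ_g (b γ_{g⁻¹} a))`, so the KMS condition is
the conformality condition applied to `b γ_{g⁻¹} a`. Conversely, `a = 1`, `h = g⁻¹` in the KMS
condition gives conformality.
-/

theorem mul_eq_mul_of_mul_mul_eq {M : Type*} [Monoid M] {v w x y : M} (hwv : w * v = 1)
    (h : v * x * w = y) : v * x = y * v := by
  rw [← h, mul_assoc, hwv, mul_one]

theorem map_one_of_map_mul_of_mem_unitary {G M : Type*} [Group G] [Monoid M] [StarMul M]
    {u : G → M} (hu_mul : ∀ g h, u g * u h = u (g * h)) (hu : ∀ g, u g ∈ unitary M) :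
    u 1 = 1 :=
  congrArg Subtype.val <| map_one <|
    MonoidHom.mk' (fun g => (⟨u g, hu g⟩ : unitary M)) fun g h => Subtype.ext (hu_mul g h).symm

section CovariantPair

variable {G A B F : Type*} [Mul A] [Monoid B] [FunLike F A B] [MulHomClass F A B]
  {ι : F} {u : G → B} {γ : G → A → A}

theorem monomial_mul_monomial [Mul G] (hu_mul : ∀ g h, u g * u h = u (g * h))
    (hcomm : ∀ g a, u g * ι a = ι (γ g a) * u g) (a b : A) (g h : G) :
    ι a * u g * (ι b * u h) = ι (a * γ g b) * u (g * h) := by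
  rw [mul_assoc, ← mul_assoc (u g), hcomm, mul_assoc, hu_mul, ← mul_assoc, map_mul]

theorem monomial_mul_coeff (hcomm : ∀ g a, u g * ι a = ι (γ g a) * u g) (a c : A) (g : G) :
    ι a * u g * ι c = ι (a * γ g c) * u g := by
  rw [mul_assoc, hcomm, ← mul_assoc, map_mul]

end CovariantPair

theorem trace_mul_map_eq_trace_map_mul {A R F : Type*} [Mul A] [FunLike F A A] [MulHomClass F A A]
    {τ : A → R} (hτ : ∀ x y, τ (x * y) = τ (y * x)) {σ σ' : F} (hσ : ∀ x, σ (σ' x) = x)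
    (a b : A) : τ (a * σ b) = τ (σ (b * σ' a)) := by
  rw [hτ, map_mul, hσ]

theorem stmt6_general {A : Type*} [NormedRing A] [StarRing A]
    [NormedAlgebra ℂ A]
    {G : Type*} [Group G]
    (γ : G → (A ≃⋆ₐ[ℂ] A))
    (hγ1 : ∀ x : A, γ 1 x = x)
    (hγmul : ∀ (g h : G) (x : A), γ (g * h) x = γ g (γ h x))
    (D : G → A)
    -- the crossed product B = A ⋊_γ G
    {B : Type*} [NormedRing B] [StarRing B]
    [NormedAlgebra ℂ B]
    (ι : A →⋆ₐ[ℂ] B) (u : G → B)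
    (hu_mul : ∀ g h : G, u g * u h = u (g * h))
    (hu_unitary : ∀ g : G, star (u g) * u g = 1 ∧ u g * star (u g) = 1)
    (hu_cov : ∀ (g : G) (a : A), u g * ι a * star (u g) = ι (γ g a))
    (β : ℝ)
    -- τ is a tracial state on A
    (τ : A →L[ℂ] ℂ)
    (hτtrace : ∀ x y : A, τ (x * y) = τ (y * x))
    -- P is the canonical conditional expectation
    (P : B →L[ℂ] A)
    (hP0 : ∀ (a : A) (g : G), g ≠ 1 → P (ι a * u g) = 0)
    (hPA : ∀ a : A, P (ι a) = a) :
    -- τ ∘ P is a β-KMS state for α^D iff τ is (γ, β, D)-conformal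
    ((∀ (a b : A) (g h : G),
        τ (P (ι a * u g * (ι b * u h))) =
          τ (P (ι b * u h * (ι a * u g) * ι (NormedSpace.exp ((β : ℂ) • D g))))) ↔
      (∀ (a : A) (g : G),
        τ (γ g a) = τ (a * NormedSpace.exp ((β : ℂ) • D g)))) := by
  have hu1 : u 1 = 1 := map_one_of_map_mul_of_mem_unitary hu_mul hu_unitary
  have hcomm (g : G) (a : A) : u g * ι a = ι (γ g a) * u g :=
    mul_eq_mul_of_mul_mul_eq (hu_unitary g).1 (hu_cov g a)
  have hγinv (g : G) (x : A) : γ g (γ g⁻¹ x) = x := by rw [← hγmul, mul_inv_cancel, hγ1]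
  simp only [monomial_mul_monomial hu_mul hcomm, monomial_mul_coeff hcomm]
  constructor
  · intro hKMS a g
    simpa only [one_mul, mul_inv_cancel, inv_mul_cancel, map_one, mul_one, hu1, hγ1, hPA]
      using hKMS 1 a g g⁻¹
  · intro hconf a b g h
    rcases eq_or_ne (g * h) 1 with hgh | hgh
    · obtain rfl : h = g⁻¹ := eq_inv_of_mul_eq_one_right hgh
      simp only [mul_inv_cancel, inv_mul_cancel, hu1, mul_one, hPA, hγ1]
      rw [trace_mul_map_eq_trace_map_mul hτtrace (hγinv g), hconf]
    · rw [hP0 _ _ hgh, hP0 _ _ (mul_eq_one_comm.not.mp hgh)]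

/-- With `A`, `γ`, `D` and the crossed product as before, let `τ` be a tracial
state on `A` and `P : A ⋊_γ G → A` the canonical conditional expectation with
`P (a u_g) = 0` for `g ≠ e` and `P a = a`.  Then `τ ∘ P` is a `β`-KMS state for `α^D`
(expressed via the condition on the spanning elements) if and only if
`τ (γ_g a) = τ (a e^{β D_g})` for all `a ∈ A` and `g ∈ G`. -/
theorem stmt6 {A : Type*} [NormedRing A] [StarRing A] [CStarRing A]
    [NormedAlgebra ℂ A] [CompleteSpace A] [StarModule ℂ A]
    {G : Type*} [Group G] [Countable G]
    (γ : G → (A ≃⋆ₐ[ℂ] A))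
    (hγ1 : ∀ x : A, γ 1 x = x)
    (hγmul : ∀ (g h : G) (x : A), γ (g * h) x = γ g (γ h x))
    (D : G → A)
    (hDsa : ∀ g, star (D g) = D g)
    (hDcentral : ∀ g, ∀ x : A, D g * x = x * D g)
    (hDcocycle : ∀ g h : G, γ h⁻¹ (D g) + D h = D (g * h))
    -- the crossed product B = A ⋊_γ G
    {B : Type*} [NormedRing B] [StarRing B] [CStarRing B]
    [NormedAlgebra ℂ B] [CompleteSpace B] [StarModule ℂ B]
    (ι : A →⋆ₐ[ℂ] B) (u : G → B)
    (hu_mul : ∀ g h : G, u g * u h = u (g * h))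
    (hu_unitary : ∀ g : G, star (u g) * u g = 1 ∧ u g * star (u g) = 1)
    (hu_cov : ∀ (g : G) (a : A), u g * ι a * star (u g) = ι (γ g a))
    (β : ℝ)
    -- τ is a tracial state on A
    (τ : A →L[ℂ] ℂ) (hτ1 : τ 1 = 1)
    (hτpos : ∀ x : A, 0 ≤ (τ (star x * x)).re ∧ (τ (star x * x)).im = 0)
    (hτtrace : ∀ x y : A, τ (x * y) = τ (y * x))
    -- P is the canonical conditional expectation
    (P : B →L[ℂ] A)
    (hP0 : ∀ (a : A) (g : G), g ≠ 1 → P (ι a * u g) = 0)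
    (hPA : ∀ a : A, P (ι a) = a) :
    -- τ ∘ P is a β-KMS state for α^D iff τ is (γ, β, D)-conformal
    ((∀ (a b : A) (g h : G),
        τ (P (ι a * u g * (ι b * u h))) =
          τ (P (ι b * u h * (ι a * u g) * ι (NormedSpace.exp ((β : ℂ) • D g))))) ↔
      (∀ (a : A) (g : G),
        τ (γ g a) = τ (a * NormedSpace.exp ((β : ℂ) • D g)))) :=
  stmt6_general γ hγ1 hγmul D ι u hu_mul hu_unitary hu_cov β τ hτtrace P hP0 hPA
end

section
/- Let τ be a tracial state on A satisfying τ(γ_g(a)) = τ(a e^{β D_g}) for all a ∈ A and g ∈ G. Then for each g ∈ G the map π_τ(a)Ω_τ ↦ π_τ(γ_g(a) e^{(β/2) D_{g⁻¹}})Ω_τ extends to a unitary W_g on the GNS Hilbert space H_τ, and g ↦ W_g is a unitary representation of G satisfying W_g π_τ(a) W_g* = π_τ(γ_g(a)) for all a ∈ A. -/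
/-!
The twisted map `a ↦ γ_g(a) e^{(β/2) D_{g⁻¹}}` preserves the GNS norm: since `D` is central and
self-adjoint, `‖π(γ_g(a) e^{(β/2) D_{g⁻¹}})Ω‖² = τ(γ_g(a*a) e^{β D_{g⁻¹}})`, and the cocycle identity
gives `D_{g⁻¹} = -γ_g(D_g)`, so conformality turns this into `τ(a*a) = ‖π(a)Ω‖²`. The twisted maps
form a group action by the cocycle identity, so they extend from the dense subspace `π(A)Ω` to a
unitary representation. The covariance `W_g π(a) = π(γ_g a) W_g` holds on `π(A)Ω`, hence everywhere.
-/

open NormedSpace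

section Cocycle

variable {G A F : Type*} [Group G] [AddGroup A] [FunLike F A A] {γ : G → F} {D : G → A}

theorem cocycle_one (hγ1 : ∀ x, γ 1 x = x) (hD : ∀ g h, γ h⁻¹ (D g) + D h = D (g * h)) :
    D 1 = 0 := by
  have h := hD 1 1
  rwa [inv_one, hγ1, mul_one, add_eq_right] at h

theorem cocycle_inv (hγ1 : ∀ x, γ 1 x = x) (hD : ∀ g h, γ h⁻¹ (D g) + D h = D (g * h)) (g : G) :
    D g⁻¹ = -γ g (D g) := by
  have h := hD g g⁻¹
  rw [inv_inv, mul_inv_cancel, cocycle_one hγ1 hD] at h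
  exact eq_neg_of_add_eq_zero_right h

theorem cocycle_mul_inv (hD : ∀ g h, γ h⁻¹ (D g) + D h = D (g * h)) (g h : G) :
    D (g * h)⁻¹ = γ g (D h⁻¹) + D g⁻¹ := by
  rw [mul_inv_rev, ← hD, inv_inv]

end Cocycle

theorem star_mul_mul_mul_self_of_central {R : Type*} [Monoid R] [StarMul R] {e : R}
    (he : IsSelfAdjoint e) (hcentral : ∀ y, Commute e y) (x : R) :
    star (x * e) * (x * e) = star x * x * (e * e) := by
  rw [star_mul, he.star_eq, (hcentral (star x)).eq, mul_assoc, ← mul_assoc e, (hcentral x).eq]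
  simp only [mul_assoc]

section CStarAlgebra

variable {A : Type*} [CStarAlgebra A]

theorem StarAlgEquiv.map_exp (σ : A ≃⋆ₐ[ℂ] A) (x : A) : σ (exp x) = exp (σ x) :=
  letI : NormedAlgebra ℚ A := .restrictScalars ℚ ℂ A
  NormedSpace.map_exp σ (StarAlgEquiv.isometry σ).continuous x

theorem exp_smul_mul_exp_smul (r s : ℂ) (d : A) :
    exp (r • d) * exp (s • d) = exp ((r + s) • d) := by
  let : NormedAlgebra ℚ A := .restrictScalars ℚ ℂ A
  rw [add_smul, exp_add_of_commute (((Commute.refl d).smul_left r).smul_right s)]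

variable {G : Type*} [Group G] {γ : G → A ≃⋆ₐ[ℂ] A} {D : G → A}

theorem exp_smul_cocycle_mul_inv (hcentral : ∀ g x, Commute (D g) x)
    (hD : ∀ g h, γ h⁻¹ (D g) + D h = D (g * h)) (s : ℂ) (g h : G) :
    exp (s • D (g * h)⁻¹) = γ g (exp (s • D h⁻¹)) * exp (s • D g⁻¹) := by
  let : NormedAlgebra ℚ A := .restrictScalars ℚ ℂ A
  have hcomm : Commute (s • γ g (D h⁻¹)) (s • D g⁻¹) :=
    (((hcentral g⁻¹ _).symm).smul_left s).smul_right s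
  rw [cocycle_mul_inv hD, smul_add, exp_add_of_commute hcomm, StarAlgEquiv.map_exp, map_smul]

theorem apply_map_mul_exp_smul_cocycle_inv {M : Type*} {τ : A → M} (hγ1 : ∀ x, γ 1 x = x)
    (hD : ∀ g h, γ h⁻¹ (D g) + D h = D (g * h)) {β : ℂ}
    (hconf : ∀ a g, τ (γ g a) = τ (a * exp (β • D g))) (g : G) (x : A) :
    τ (γ g x * exp (β • D g⁻¹)) = τ x := by
  rw [cocycle_inv hγ1 hD, smul_neg, ← neg_smul, ← map_smul, ← StarAlgEquiv.map_exp, ← map_mul,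
    hconf, mul_assoc, exp_smul_mul_exp_smul, neg_add_cancel, zero_smul, exp_zero, mul_one]

variable (γ D) in
noncomputable def twistedAction (s : ℂ) (g : G) : A ≃ₗ[ℂ] A :=
  letI : NormedAlgebra ℚ A := .restrictScalars ℚ ℂ A
  (γ g).toAlgEquiv.toLinearEquiv ≪≫ₗ (isUnit_exp (s • D g⁻¹)).unit.mulRightLinearEquiv ℂ

theorem twistedAction_apply (s : ℂ) (g : G) (a : A) :
    twistedAction γ D s g a = γ g a * exp (s • D g⁻¹) :=
  rfl

theorem twistedAction_mul (hγmul : ∀ g h x, γ (g * h) x = γ g (γ h x))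
    (hcentral : ∀ g x, Commute (D g) x) (hD : ∀ g h, γ h⁻¹ (D g) + D h = D (g * h)) (s : ℂ)
    (g h : G) (a : A) :
    twistedAction γ D s (g * h) a = twistedAction γ D s g (twistedAction γ D s h a) := by
  simp only [twistedAction_apply]
  rw [hγmul, exp_smul_cocycle_mul_inv hcentral hD, map_mul, mul_assoc]

theorem twistedAction_mul_left (s : ℂ) (g : G) (a b : A) :
    twistedAction γ D s g (a * b) = γ g a * twistedAction γ D s g b := by
  rw [twistedAction_apply, twistedAction_apply, map_mul, mul_assoc]

theorem apply_star_mul_self_twistedAction {M : Type*} {τ : A → M}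
    (hγ1 : ∀ x, γ 1 x = x) (hD : ∀ g h, γ h⁻¹ (D g) + D h = D (g * h))
    (hsa : ∀ g, IsSelfAdjoint (D g)) (hcentral : ∀ g x, Commute (D g) x) {β : ℝ}
    (hconf : ∀ a g, τ (γ g a) = τ (a * exp ((β : ℂ) • D g))) (g : G) (a : A) :
    τ (star (twistedAction γ D (β / 2 : ℝ) g a) * twistedAction γ D (β / 2 : ℝ) g a) =
      τ (star a * a) := by
  have hsa' : IsSelfAdjoint (exp (((β / 2 : ℝ) : ℂ) • D g⁻¹)) :=
    (IsSelfAdjoint.smul (Complex.conj_ofReal _) (hsa g⁻¹)).exp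
  have hcentral' : ∀ y, Commute (exp (((β / 2 : ℝ) : ℂ) • D g⁻¹)) y := fun y =>
    ((hcentral g⁻¹ y).smul_left _).exp_left
  rw [twistedAction_apply, star_mul_mul_mul_self_of_central hsa' hcentral', exp_smul_mul_exp_smul,
    ← map_star, ← map_mul, ← Complex.ofReal_add, add_halves,
    apply_map_mul_exp_smul_cocycle_inv hγ1 hD hconf]

end CStarAlgebra

section GNS

variable {A H : Type*} [Semiring A] [Algebra ℂ A] [Star A]
  [NormedAddCommGroup H] [InnerProductSpace ℂ H] [CompleteSpace H]

theorem inner_map_apply_map_apply (π : A →⋆ₐ[ℂ] (H →L[ℂ] H)) (a b : A) (x y : H) :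
    inner ℂ (π a x) (π b y) = inner ℂ x (π (star a * b) y) := by
  rw [map_mul, map_star, ContinuousLinearMap.star_eq_adjoint, mul_apply_eq_comp,
    ContinuousLinearMap.adjoint_inner_right]

theorem norm_map_apply (π : A →⋆ₐ[ℂ] (H →L[ℂ] H)) (a : A) (x : H) :
    ‖π a x‖ = √(RCLike.re (inner ℂ x (π (star a * a) x))) := by
  rw [norm_eq_sqrt_re_inner (𝕜 := ℂ), inner_map_apply_map_apply]

noncomputable def orbitMap (π : A →⋆ₐ[ℂ] (H →L[ℂ] H)) (Ω : H) : A →ₗ[ℂ] H :=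
  (ContinuousLinearMap.apply ℂ H Ω).toLinearMap ∘ₗ π.toAlgHom.toLinearMap

@[simp]
theorem orbitMap_apply (π : A →⋆ₐ[ℂ] (H →L[ℂ] H)) (Ω : H) (a : A) : orbitMap π Ω a = π a Ω :=
  rfl

theorem orbitMap_mul (π : A →⋆ₐ[ℂ] (H →L[ℂ] H)) (Ω : H) (a b : A) :
    orbitMap π Ω (a * b) = π a (orbitMap π Ω b) := by
  rw [orbitMap_apply, map_mul, mul_apply_eq_comp, orbitMap_apply]

theorem denseRange_orbitMap {π : A →⋆ₐ[ℂ] (H →L[ℂ] H)} {Ω : H}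
    (hcyclic : (Submodule.span ℂ (Set.range fun a : A => π a Ω)).topologicalClosure = ⊤) :
    DenseRange (orbitMap π Ω) := by
  rw [DenseRange, ← LinearMap.coe_range, Submodule.dense_iff_topologicalClosure_eq_top,
    ← hcyclic, ← Submodule.span_eq (LinearMap.range _), LinearMap.coe_range]
  rfl

end GNS

section Extension

variable {𝕜 G V E : Type*} [NormedField 𝕜] [Group G] [AddCommGroup V] [Module 𝕜 V]
  [NormedAddCommGroup E] [NormedSpace 𝕜 E] [CompleteSpace E]

theorem exists_linearIsometryEquiv_extension_of_denseRange (T : G → V ≃ₗ[𝕜] V)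
    (hT : ∀ g h v, T (g * h) v = T g (T h v)) (L : V →ₗ[𝕜] E) (hL : DenseRange L)
    (hnorm : ∀ g v, ‖L (T g v)‖ = ‖L v‖) :
    ∃ W : G → E ≃ₗᵢ[𝕜] E,
      (∀ g v, W g (L v) = L (T g v)) ∧ ∀ g h x, W (g * h) x = W g (W h x) := by
  let W g := (T g).extendOfIsometry L L hL hL (hnorm g)
  have hW : ∀ g v, W g (L v) = L (T g v) := fun g v => LinearEquiv.extendOfIsometry_eq ..
  refine ⟨W, hW, fun g h => congrFun (hL.equalizer (W (g * h)).continuous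
    ((W g).continuous.comp (W h).continuous) (funext fun v => ?_))⟩
  simp only [Function.comp_apply, hW, hT]

end Extension

theorem LinearIsometryEquiv.apply_apply_symm_of_denseRange {𝕜 E V : Type*} [NormedField 𝕜]
    [NormedAddCommGroup E] [NormedSpace 𝕜 E] (W : E ≃ₗᵢ[𝕜] E) {P Q : E → E}
    (hP : Continuous P) (hQ : Continuous Q) {L : V → E} (hL : DenseRange L)
    (h : ∀ v, W (P (L v)) = Q (W (L v))) (x : E) : W (P (W.symm x)) = Q x := by
  have hWP : W ∘ P = Q ∘ W :=
    hL.equalizer (W.continuous.comp hP) (hQ.comp W.continuous) (funext h)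
  simpa using congrFun hWP (W.symm x)

theorem stmt7_general {A : Type*} [NormedRing A] [StarRing A] [CStarRing A]
    [NormedAlgebra ℂ A] [CompleteSpace A] [StarModule ℂ A]
    {G : Type*} [Group G]
    (γ : G → (A ≃⋆ₐ[ℂ] A))
    (hγ1 : ∀ x : A, γ 1 x = x)
    (hγmul : ∀ (g h : G) (x : A), γ (g * h) x = γ g (γ h x))
    (D : G → A)
    (hDsa : ∀ g, star (D g) = D g)
    (hDcentral : ∀ g, ∀ x : A, D g * x = x * D g)
    (hDcocycle : ∀ g h : G, γ h⁻¹ (D g) + D h = D (g * h))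
    (β : ℝ)
    -- τ is a tracial state on A
    (τ : A →L[ℂ] ℂ)
    -- the conformality condition
    (hconf : ∀ (a : A) (g : G), τ (γ g a) = τ (a * NormedSpace.exp ((β : ℂ) • D g)))
    -- the GNS representation (H_τ, π_τ, Ω_τ) of τ
    {H : Type*} [NormedAddCommGroup H] [InnerProductSpace ℂ H] [CompleteSpace H]
    (π : A →⋆ₐ[ℂ] (H →L[ℂ] H)) (Ω : H)
    (hGNS : ∀ a : A, (inner ℂ Ω (π a Ω) : ℂ) = τ a)
    (hcyclic : (Submodule.span ℂ (Set.range fun a : A => π a Ω)).topologicalClosure = ⊤) :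
    -- conclusion: the unitary representation W
    ∃ W : G → (H ≃ₗᵢ[ℂ] H),
      (∀ (g : G) (a : A),
        W g (π a Ω) =
          π (γ g a * NormedSpace.exp (((β / 2 : ℝ) : ℂ) • D g⁻¹)) Ω) ∧
      (∀ g h : G, ∀ x : H, W (g * h) x = W g (W h x)) ∧
      (∀ (g : G) (a : A) (x : H), W g (π a ((W g).symm x)) = π (γ g a) x) := by
  let : CStarAlgebra A := { ‹NormedRing A›, ‹StarRing A›, ‹CompleteSpace A›, ‹CStarRing A›,
      ‹NormedAlgebra ℂ A›, ‹StarModule ℂ A› with }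
  have hnorm : ∀ g a,
      ‖orbitMap π Ω (twistedAction γ D (β / 2 : ℝ) g a)‖ = ‖orbitMap π Ω a‖ := fun g a => by
    rw [orbitMap_apply, orbitMap_apply, norm_map_apply, norm_map_apply, hGNS, hGNS,
      apply_star_mul_self_twistedAction hγ1 hDcocycle hDsa hDcentral hconf]
  obtain ⟨W, hW, hW_mul⟩ := exists_linearIsometryEquiv_extension_of_denseRange
    (twistedAction γ D (β / 2 : ℝ)) (twistedAction_mul hγmul hDcentral hDcocycle _)
    (orbitMap π Ω) (denseRange_orbitMap hcyclic) hnorm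
  refine ⟨W, hW, hW_mul, fun g a => (W g).apply_apply_symm_of_denseRange (π a).continuous
    (π (γ g a)).continuous (denseRange_orbitMap hcyclic) fun b => ?_⟩
  rw [← orbitMap_mul, hW, hW, twistedAction_mul_left, orbitMap_mul]

/-- Let `τ` be a tracial state on `A` satisfying
`τ (γ_g a) = τ (a e^{β D_g})` for all `a ∈ A`, `g ∈ G`.  Then for each `g ∈ G` the map
`π_τ(a) Ω_τ ↦ π_τ(γ_g(a) e^{(β/2) D_{g⁻¹}}) Ω_τ` extends to a unitary `W_g` on the GNS
Hilbert space `H_τ`, and `g ↦ W_g` is a unitary representation of `G` with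
`W_g π_τ(a) W_g* = π_τ(γ_g a)`. -/
theorem stmt7 {A : Type*} [NormedRing A] [StarRing A] [CStarRing A]
    [NormedAlgebra ℂ A] [CompleteSpace A] [StarModule ℂ A]
    {G : Type*} [Group G] [Countable G]
    (γ : G → (A ≃⋆ₐ[ℂ] A))
    (hγ1 : ∀ x : A, γ 1 x = x)
    (hγmul : ∀ (g h : G) (x : A), γ (g * h) x = γ g (γ h x))
    (D : G → A)
    (hDsa : ∀ g, star (D g) = D g)
    (hDcentral : ∀ g, ∀ x : A, D g * x = x * D g)
    (hDcocycle : ∀ g h : G, γ h⁻¹ (D g) + D h = D (g * h))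
    (β : ℝ)
    -- τ is a tracial state on A
    (τ : A →L[ℂ] ℂ) (hτ1 : τ 1 = 1)
    (hτpos : ∀ x : A, 0 ≤ (τ (star x * x)).re ∧ (τ (star x * x)).im = 0)
    (hτtrace : ∀ x y : A, τ (x * y) = τ (y * x))
    -- the conformality condition
    (hconf : ∀ (a : A) (g : G), τ (γ g a) = τ (a * NormedSpace.exp ((β : ℂ) • D g)))
    -- the GNS representation (H_τ, π_τ, Ω_τ) of τ
    {H : Type*} [NormedAddCommGroup H] [InnerProductSpace ℂ H] [CompleteSpace H]
    (π : A →⋆ₐ[ℂ] (H →L[ℂ] H)) (Ω : H)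
    (hGNS : ∀ a : A, (inner ℂ Ω (π a Ω) : ℂ) = τ a)
    (hcyclic : (Submodule.span ℂ (Set.range fun a : A => π a Ω)).topologicalClosure = ⊤) :
    -- conclusion: the unitary representation W
    ∃ W : G → (H ≃ₗᵢ[ℂ] H),
      (∀ (g : G) (a : A),
        W g (π a Ω) =
          π (γ g a * NormedSpace.exp (((β / 2 : ℝ) : ℂ) • D g⁻¹)) Ω) ∧
      (∀ g h : G, ∀ x : H, W (g * h) x = W g (W h x)) ∧
      (∀ (g : G) (a : A) (x : H), W g (π a ((W g).symm x)) = π (γ g a) x) :=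
  stmt7_general γ hγ1 hγmul D hDsa hDcentral hDcocycle β τ hconf π Ω hGNS hcyclic
end

section
/- In the setting of an étale groupoid 𝒢 with unit space 𝒢⁽⁰⁾: let f, k ∈ C_c(𝒢) with f supported in an open bisection W. Then for x ∈ 𝒢⁽⁰⁾ and g ∈ 𝒢 with s(g) = r(g) = x: if x = s(h) for the (unique) h ∈ W with s(h) = x, then (f* * k * f)(g) = |f(h)|² k(h g h⁻¹), and if x ∉ s(W) then (f* * k * f)(g) = 0. -/
/-- A locally compact second countable Hausdorff étale groupoid, encoded with total
source, range, inverse and a (total) multiplication map which is only required to behave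
on composable pairs (`src g = rng h`). -/
structure EtaleGroupoidData (G : Type*) [TopologicalSpace G] where
  src : G → G
  rng : G → G
  mul : G → G → G
  inv : G → G
  src_src : ∀ g, src (src g) = src g
  rng_src : ∀ g, rng (src g) = src g
  src_rng : ∀ g, src (rng g) = rng g
  rng_rng : ∀ g, rng (rng g) = rng g
  rng_mul : ∀ g h, src g = rng h → rng (mul g h) = rng g
  src_mul : ∀ g h, src g = rng h → src (mul g h) = src h
  mul_assoc' : ∀ g h k, src g = rng h → src h = rng k →
    mul (mul g h) k = mul g (mul h k)
  mul_src : ∀ g, mul g (src g) = g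
  rng_mul_self : ∀ g, mul (rng g) g = g
  src_inv : ∀ g, src (inv g) = rng g
  rng_inv : ∀ g, rng (inv g) = src g
  inv_mul : ∀ g, mul (inv g) g = src g
  mul_inv : ∀ g, mul g (inv g) = rng g
  continuous_rng : Continuous rng
  continuous_inv : Continuous inv
  etale_src : IsLocalHomeomorph src
  etale_rng : IsLocalHomeomorph rng

/-- The convolution product `(f₁ * f₂)(g) = Σ_{h : r(h) = r(g)} f₁(h) f₂(h⁻¹ g)`. -/
noncomputable def groupoidConv {G : Type*} [TopologicalSpace G]
    (𝒢 : EtaleGroupoidData G) (f₁ f₂ : G → ℂ) (g : G) : ℂ :=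
  ∑ᶠ h ∈ {h : G | 𝒢.rng h = 𝒢.rng g}, f₁ h * f₂ (𝒢.mul (𝒢.inv h) g)

/-- The involution `f*(g) = conj (f (g⁻¹))`. -/
noncomputable def groupoidStar {G : Type*} [TopologicalSpace G]
    (𝒢 : EtaleGroupoidData G) (f : G → ℂ) (g : G) : ℂ :=
  (starRingEnd ℂ) (f (𝒢.inv g))

/-!
Since `s` is injective on the bisection `W` and `f` vanishes off `W`, each finite sum defining a
convolution with `f` (on the right) or with `f*` (on the left) has at most one nonzero term.
For `(f* * (k * f))(g)` the surviving outer term is the one at `h⁻¹`, which leaves `(k * f)(hg)`,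
and there the surviving term is the factorization `hg = (hgh⁻¹) h`.
-/

theorem finsum_mem_eq_single_of_mem {α M : Type*} [AddCommMonoid M] (f : α → M) {s : Set α}
    {a : α} (ha : a ∈ s) (h : ∀ b ∈ s, b ≠ a → f b = 0) : ∑ᶠ i ∈ s, f i = f a := by
  rw [finsum_mem_def, finsum_eq_single _ a fun b hb => ?_, Set.indicator_of_mem ha]
  by_cases hbs : b ∈ s
  · rw [Set.indicator_of_mem hbs, h b hbs hb]
  · exact Set.indicator_of_notMem hbs _

namespace EtaleGroupoidData

variable {G : Type*} [TopologicalSpace G] (𝒢 : EtaleGroupoidData G)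

theorem inv_mul_cancel_left {a b : G} (h : 𝒢.src a = 𝒢.rng b) :
    𝒢.mul (𝒢.inv a) (𝒢.mul a b) = b := by
  rw [← 𝒢.mul_assoc' _ _ _ (𝒢.src_inv a) h, 𝒢.inv_mul, h, 𝒢.rng_mul_self]

theorem mul_inv_cancel_left {a b : G} (h : 𝒢.rng a = 𝒢.rng b) :
    𝒢.mul a (𝒢.mul (𝒢.inv a) b) = b := by
  rw [← 𝒢.mul_assoc' _ _ _ (𝒢.rng_inv a).symm ((𝒢.src_inv a).trans h), 𝒢.mul_inv, h,
    𝒢.rng_mul_self]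

theorem mul_inv_cancel_right {a b : G} (h : 𝒢.src a = 𝒢.rng b) :
    𝒢.mul (𝒢.mul a b) (𝒢.inv b) = a := by
  rw [𝒢.mul_assoc' _ _ _ h (𝒢.rng_inv b).symm, 𝒢.mul_inv, ← h, 𝒢.mul_src]

theorem inv_mul_cancel_right {a b : G} (h : 𝒢.src a = 𝒢.src b) :
    𝒢.mul (𝒢.mul a (𝒢.inv b)) b = a := by
  rw [𝒢.mul_assoc' _ _ _ (h.trans (𝒢.rng_inv b).symm) (𝒢.src_inv b), 𝒢.inv_mul, ← h,
    𝒢.mul_src]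

theorem inv_inv (g : G) : 𝒢.inv (𝒢.inv g) = g := by
  have := 𝒢.inv_mul_cancel_left (𝒢.src_inv g)
  rwa [𝒢.inv_mul, ← 𝒢.rng_inv, ← 𝒢.src_inv, 𝒢.mul_src] at this

theorem inv_injective : Function.Injective 𝒢.inv :=
  Function.LeftInverse.injective 𝒢.inv_inv

theorem injOn_rng_preimage_inv {W : Set G} (hW : Set.InjOn 𝒢.src W) :
    Set.InjOn 𝒢.rng (𝒢.inv ⁻¹' W) := fun a ha b hb hab =>
  𝒢.inv_injective (hW ha hb (by rw [𝒢.src_inv, 𝒢.src_inv, hab]))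

theorem rng_image_preimage_inv (W : Set G) : 𝒢.rng '' (𝒢.inv ⁻¹' W) = 𝒢.src '' W := by
  ext y
  constructor
  · rintro ⟨a, ha, rfl⟩
    exact ⟨𝒢.inv a, ha, 𝒢.src_inv a⟩
  · rintro ⟨w, hw, rfl⟩
    exact ⟨𝒢.inv w, by rwa [Set.mem_preimage, 𝒢.inv_inv], 𝒢.rng_inv w⟩

end EtaleGroupoidData

section Convolution

variable {G : Type*} [TopologicalSpace G] (𝒢 : EtaleGroupoidData G)

theorem groupoidConv_eq_of_rng_injOn {V : Set G} (hV : Set.InjOn 𝒢.rng V) {f₁ : G → ℂ}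
    (hf₁ : ∀ a ∉ V, f₁ a = 0) (f₂ : G → ℂ) {u g : G} (huV : u ∈ V) (hu : 𝒢.rng u = 𝒢.rng g) :
    groupoidConv 𝒢 f₁ f₂ g = f₁ u * f₂ (𝒢.mul (𝒢.inv u) g) := by
  refine finsum_mem_eq_single_of_mem _ hu fun b hb hbu => ?_
  have hb0 : f₁ b = 0 := by
    by_contra hb0
    exact hbu (hV (not_not.mp (mt (hf₁ b) hb0)) huV (hb.trans hu.symm))
  rw [hb0, zero_mul]

theorem groupoidConv_eq_zero_of_rng_notMem {V : Set G} {f₁ : G → ℂ} (hf₁ : ∀ a ∉ V, f₁ a = 0)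
    (f₂ : G → ℂ) {g : G} (hg : 𝒢.rng g ∉ 𝒢.rng '' V) : groupoidConv 𝒢 f₁ f₂ g = 0 := by
  refine finsum_mem_of_eqOn_zero fun b hb => ?_
  have hbV : b ∉ V := fun hbV => hg ⟨b, hbV, hb⟩
  rw [Pi.zero_apply, hf₁ b hbV, zero_mul]

theorem groupoidConv_eq_of_src_injOn {W : Set G} (hW : Set.InjOn 𝒢.src W) (f₁ : G → ℂ)
    {f₂ : G → ℂ} (hf₂ : ∀ a ∉ W, f₂ a = 0) {h g : G} (hhW : h ∈ W) (hh : 𝒢.src h = 𝒢.src g) :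
    groupoidConv 𝒢 f₁ f₂ g = f₁ (𝒢.mul g (𝒢.inv h)) * f₂ h := by
  have hcomp : 𝒢.src g = 𝒢.rng (𝒢.inv h) := by rw [𝒢.rng_inv, hh]
  have hquot : 𝒢.mul (𝒢.inv (𝒢.mul g (𝒢.inv h))) g = h := by
    calc _ = 𝒢.mul (𝒢.inv (𝒢.mul g (𝒢.inv h))) (𝒢.mul (𝒢.mul g (𝒢.inv h)) h) := by
          rw [𝒢.inv_mul_cancel_right hh.symm]
      _ = h := 𝒢.inv_mul_cancel_left (by rw [𝒢.src_mul _ _ hcomp, 𝒢.src_inv])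
  have hmem : 𝒢.mul g (𝒢.inv h) ∈ {b | 𝒢.rng b = 𝒢.rng g} := 𝒢.rng_mul _ _ hcomp
  rw [groupoidConv, finsum_mem_eq_single_of_mem _ hmem fun b hb hbne => ?_, hquot]
  have hb2 : f₂ (𝒢.mul (𝒢.inv b) g) = 0 := by
    by_contra hb2
    have hcomp_b : 𝒢.src (𝒢.inv b) = 𝒢.rng g := (𝒢.src_inv b).trans hb
    have hbh : 𝒢.mul (𝒢.inv b) g = h :=
      hW (not_not.mp (mt (hf₂ _) hb2)) hhW (by rw [𝒢.src_mul _ _ hcomp_b, hh])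
    refine hbne ?_
    calc b = 𝒢.mul (𝒢.mul b h) (𝒢.inv h) :=
          (𝒢.mul_inv_cancel_right (by rw [← hbh, 𝒢.rng_mul _ _ hcomp_b, 𝒢.rng_inv])).symm
      _ = 𝒢.mul g (𝒢.inv h) := by rw [← hbh, 𝒢.mul_inv_cancel_left hb]
  rw [hb2, mul_zero]

theorem groupoidStar_eq_zero_of_inv_notMem {W : Set G} {f : G → ℂ} (hf : ∀ a ∉ W, f a = 0)
    {a : G} (ha : a ∉ 𝒢.inv ⁻¹' W) : groupoidStar 𝒢 f a = 0 := by
  rw [groupoidStar, hf _ ha, map_zero]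

theorem groupoidConv_groupoidStar_eq {W : Set G} (hW : Set.InjOn 𝒢.src W) {f : G → ℂ}
    (hf : ∀ a ∉ W, f a = 0) (k : G → ℂ) {h g : G} (hhW : h ∈ W) (hh : 𝒢.src h = 𝒢.rng g) :
    groupoidConv 𝒢 (groupoidStar 𝒢 f) k g = (starRingEnd ℂ) (f h) * k (𝒢.mul h g) := by
  rw [groupoidConv_eq_of_rng_injOn 𝒢 (𝒢.injOn_rng_preimage_inv hW)
    (fun _ => groupoidStar_eq_zero_of_inv_notMem 𝒢 hf) k (u := 𝒢.inv h)
    (by rwa [Set.mem_preimage, 𝒢.inv_inv]) (by rw [𝒢.rng_inv, hh])]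
  simp only [groupoidStar, 𝒢.inv_inv]

theorem groupoidConv_groupoidStar_eq_zero {W : Set G} {f : G → ℂ} (hf : ∀ a ∉ W, f a = 0)
    (k : G → ℂ) {g : G} (hg : 𝒢.rng g ∉ 𝒢.src '' W) :
    groupoidConv 𝒢 (groupoidStar 𝒢 f) k g = 0 :=
  groupoidConv_eq_zero_of_rng_notMem 𝒢 (fun _ => groupoidStar_eq_zero_of_inv_notMem 𝒢 hf) k
    (by rwa [𝒢.rng_image_preimage_inv])

end Convolution

theorem stmt8_general {G : Type*} [TopologicalSpace G]
    (𝒢 : EtaleGroupoidData G)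
    (f k : G → ℂ)
    (W : Set G)
    (hWsrc : Set.InjOn 𝒢.src W)
    (hfW : ∀ g ∉ W, f g = 0)
    (x g : G) (hsg : 𝒢.src g = x) (hrg : 𝒢.rng g = x) :
    (∀ h ∈ W, 𝒢.src h = x →
      groupoidConv 𝒢 (groupoidStar 𝒢 f) (groupoidConv 𝒢 k f) g =
        (starRingEnd ℂ) (f h) * f h * k (𝒢.mul (𝒢.mul h g) (𝒢.inv h))) ∧
    (x ∉ 𝒢.src '' W →
      groupoidConv 𝒢 (groupoidStar 𝒢 f) (groupoidConv 𝒢 k f) g = 0) := by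
  refine ⟨fun h hhW hsh => ?_, fun hxW => ?_⟩
  · have hcomp : 𝒢.src h = 𝒢.rng g := hsh.trans hrg.symm
    rw [groupoidConv_groupoidStar_eq 𝒢 hWsrc hfW _ hhW hcomp,
      groupoidConv_eq_of_src_injOn 𝒢 hWsrc k hfW hhW (by rw [𝒢.src_mul _ _ hcomp, hsg, hsh]),
      mul_assoc, mul_comm (k _)]
  · exact groupoidConv_groupoidStar_eq_zero 𝒢 hfW _ (hrg ▸ hxW)

/-- let `f, k ∈ C_c(𝒢)` with `f` supported in an open bisection `W`.  Then
for a unit `x` and `g` with `s(g) = r(g) = x`: if `x = s(h)` for the (unique) `h ∈ W` with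
`s(h) = x`, then `(f* * k * f)(g) = |f(h)|² k(h g h⁻¹)`, and if `x ∉ s(W)` then
`(f* * k * f)(g) = 0`. -/
theorem stmt8 {G : Type*} [TopologicalSpace G] [T2Space G] [LocallyCompactSpace G]
    [SecondCountableTopology G]
    (𝒢 : EtaleGroupoidData G)
    (f k : G → ℂ)
    (hfc : Continuous f) (hfs : HasCompactSupport f)
    (hkc : Continuous k) (hks : HasCompactSupport k)
    (W : Set G) (hWopen : IsOpen W)
    (hWsrc : Set.InjOn 𝒢.src W) (hWrng : Set.InjOn 𝒢.rng W)
    (hfW : ∀ g ∉ W, f g = 0)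
    (x g : G) (hx : 𝒢.src x = x) (hsg : 𝒢.src g = x) (hrg : 𝒢.rng g = x) :
    (∀ h ∈ W, 𝒢.src h = x →
      groupoidConv 𝒢 (groupoidStar 𝒢 f) (groupoidConv 𝒢 k f) g =
        (starRingEnd ℂ) (f h) * f h * k (𝒢.mul (𝒢.mul h g) (𝒢.inv h))) ∧
    (x ∉ 𝒢.src '' W →
      groupoidConv 𝒢 (groupoidStar 𝒢 f) (groupoidConv 𝒢 k f) g = 0) :=
  stmt8_general 𝒢 f k W hWsrc hfW x g hsg hrg
end

section
/- Let τ ∈ T_β(A) and suppose F₁, F₂ : B → π_τ(A)'' are completely positive contractions with F₁|_A = F₂|_A = π_τ and τ̄ ∘ F₁ = τ̄ ∘ F₂, where τ̄ is the faithful normal trace on π_τ(A)'' induced by the GNS vector. Then F₁ = F₂. -/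
open Filter Topology

/-- The commutant of a set of bounded operators. -/
def opCommutant {H : Type*} [NormedAddCommGroup H] [InnerProductSpace ℂ H]
    (S : Set (H →L[ℂ] H)) : Set (H →L[ℂ] H) :=
  {x | ∀ y ∈ S, x * y = y * x}

/-!
A completely positive map `F` that restricts to the representation `π` on `A` is an
`A`-bimodule map, `F (a * x * c) = π a * F x * π c`: this is Choi's multiplicative-domain
argument, since `F (a * a⋆) = F a * F a⋆` for `a ∈ A`. Consequently
`⟪π a Ω, F x (π c Ω)⟫ = ⟪Ω, F (a⋆ * x * c) Ω⟫`, so `τ̄ ∘ F₁ = τ̄ ∘ F₂` says that `F₁ x` and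
`F₂ x` have the same matrix coefficients on `π(A) Ω`, which is dense because `Ω` is cyclic.
-/

open scoped InnerProductSpace ComplexOrder ComplexConjugate

lemma Complex.eq_zero_of_forall_nonneg_quadratic {c k : ℂ}
    (h : ∀ t : ℂ, 0 ≤ t * c + conj (t * c) + conj t * t * k) : c = 0 := by
  set N := Complex.normSq c
  -- At `t = -s * conj c` the expression is `N * k.re * s ^ 2 - 2 * N * s`,
  -- of discriminant `4 * N ^ 2`.
  have quad : ∀ s : ℝ, 0 ≤ N * k.re * (s * s) + (-2 * N) * s + 0 := fun s => by
    have hs := (Complex.nonneg_iff.mp (h (-(s : ℂ) * conj c))).1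
    have hN : conj c * c = (N : ℂ) := by rw [mul_comm]; exact Complex.mul_conj c
    have e : -(s : ℂ) * conj c * c + conj (-(s : ℂ) * conj c * c)
        + conj (-(s : ℂ) * conj c) * (-(s : ℂ) * conj c) * k
        = ((-2 * N * s : ℝ) : ℂ) + ((N * s * s : ℝ) : ℂ) * k := by
      simp only [map_mul, map_neg, Complex.conj_conj, Complex.conj_ofReal]
      push_cast
      linear_combination (-2 * (s : ℂ) + (s : ℂ) ^ 2 * k) * hN
    rw [e] at hs
    simp only [Complex.add_re, Complex.ofReal_re, Complex.re_ofReal_mul] at hs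
    linarith
  have hdisc := discrim_le_zero quad
  rw [discrim] at hdisc
  exact Complex.normSq_eq_zero.mp (by nlinarith [sq_nonneg N])

section

variable {H : Type*} [NormedAddCommGroup H] [InnerProductSpace ℂ H]

namespace ContinuousLinearMap

lemma eq_zero_of_forall_inner_apply_eq_zero {S : Set H}
    (hS : Dense (Submodule.span ℂ S : Set H)) {D : H →L[ℂ] H}
    (h : ∀ u ∈ S, ∀ v ∈ S, ⟪u, D v⟫_ℂ = 0) : D = 0 := by
  refine ext_on hS fun v hv => ?_
  have : innerSL ℂ (D v) = 0 :=
    ext_on hS fun u hu => by simpa [inner_eq_zero_symm] using h u hu v hv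
  simpa using congr($this (D v))

lemma eq_adjoint_of_forall_im_inner_add_eq_zero [CompleteSpace H]
    {T S : H →L[ℂ] H} (h : ∀ v w, (⟪v, T w⟫_ℂ + ⟪w, S v⟫_ℂ).im = 0) : T = adjoint S := by
  ext w
  refine ext_inner_left ℂ fun v => ?_
  have h₁ := h v w
  have h₂ := h (Complex.I • v) w
  rw [adjoint_inner_right]
  rw [inner_smul_left, map_smul, inner_smul_right, ← inner_conj_symm w] at h₂
  rw [← inner_conj_symm w] at h₁
  simp only [Complex.add_im, Complex.mul_im, Complex.conj_re, Complex.conj_im, Complex.I_re,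
    Complex.I_im] at h₁ h₂
  apply Complex.ext <;> linarith

end ContinuousLinearMap

section CompletelyPositive

variable {B : Type*} [Ring B] [StarRing B] [Module ℂ B]

def IsCompletelyPositive (F : B →ₗ[ℂ] (H →L[ℂ] H)) : Prop :=
  ∀ (n : ℕ) (b : Fin n → B) (ξ : Fin n → H), 0 ≤ ∑ i, ∑ j, ⟪ξ i, F (star (b i) * b j) (ξ j)⟫_ℂ

namespace IsCompletelyPositive

variable {F : B →ₗ[ℂ] (H →L[ℂ] H)}

lemma im_inner_map_star_mul_self (hF : IsCompletelyPositive F) (x : B) (ξ : H) :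
    (⟪ξ, F (star x * x) ξ⟫_ℂ).im = 0 := by
  simpa [eq_comm] using (Complex.nonneg_iff.mp (hF 1 ![x] ![ξ])).2

lemma map_star [CompleteSpace H] (hF : IsCompletelyPositive F) (x : B) :
    F (star x) = star (F x) := by
  rw [ContinuousLinearMap.star_eq_adjoint]
  refine ContinuousLinearMap.eq_adjoint_of_forall_im_inner_add_eq_zero fun v w => ?_
  have h := (Complex.nonneg_iff.mp (hF 2 ![x, 1] ![v, w])).2
  have hx := hF.im_inner_map_star_mul_self x v
  have h1 := hF.im_inner_map_star_mul_self 1 w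
  simp only [Fin.sum_univ_two, Matrix.cons_val_zero, Matrix.cons_val_one, star_one, mul_one,
    one_mul, Complex.add_im] at h h1 ⊢
  linarith

lemma map_mul_of_map_mul_star [CompleteSpace H] (hF : IsCompletelyPositive F) (h1 : F 1 = 1)
    {a : B} (ha : F (a * star a) = F a * F (star a)) (x : B) : F (a * x) = F a * F x := by
  ext ξ
  refine ext_inner_left ℂ fun η => ?_
  rw [← sub_eq_zero]
  refine Complex.eq_zero_of_forall_nonneg_quadratic (k := ⟪ξ, F (star x * x) ξ⟫_ℂ) fun t => ?_
  obtain ⟨ζ, hζ⟩ : ∃ ζ, ContinuousLinearMap.adjoint (F a) η = ζ := ⟨_, rfl⟩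
  have hleft (z : H) : ⟪η, F a z⟫_ℂ = ⟪ζ, z⟫_ℂ := by
    rw [← hζ, ContinuousLinearMap.adjoint_inner_left]
  have hright (z : H) : ⟪F a z, η⟫_ℂ = ⟪z, ζ⟫_ℂ := by
    rw [← hζ, ContinuousLinearMap.adjoint_inner_right]
  -- Choi's trick: testing `F` on `(a⋆, 1, x)` against `(η, -F(a)†η, tξ)`, the defect
  -- `⟪η, (F (a * x) - F a * F x) ξ⟫` enters linearly in `t`, and `ha` kills the `t`-free part.
  convert hF 3 ![star a, 1, x] ![η, -ζ, t • ξ] using 1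
  simp only [Fin.sum_univ_three, Matrix.cons_val_zero, Matrix.cons_val_one, Matrix.cons_val,
    star_star, star_one, mul_one, one_mul, ← star_mul, h1, ha, hF.map_star,
    ContinuousLinearMap.star_eq_adjoint, ContinuousLinearMap.adjoint_inner_right,
    mul_apply_eq_comp, one_apply_eq_self, hζ, hleft, hright,
    map_neg, map_smul, map_mul, map_sub, inner_neg_left, inner_neg_right, inner_smul_left,
    inner_smul_right, inner_conj_symm, neg_neg, inner_self_eq_norm_sq_to_K]
  ring

lemma map_mul_of_map_star_mul [CompleteSpace H] (hF : IsCompletelyPositive F) (h1 : F 1 = 1)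
    {a : B} (ha : F (star a * a) = F (star a) * F a) (x : B) : F (x * a) = F x * F a := by
  have h := hF.map_mul_of_map_mul_star h1 (a := star a) (by rwa [star_star]) (star x)
  rw [← star_mul, hF.map_star, hF.map_star, hF.map_star, ← star_mul] at h
  exact star_injective h

end IsCompletelyPositive

end CompletelyPositive

namespace IsCompletelyPositive

variable {B : Type*} [Ring B] [StarRing B] [Algebra ℂ B] [StarModule ℂ B] [CompleteSpace H]
  {F : B →ₗ[ℂ] (H →L[ℂ] H)} {A : StarSubalgebra ℂ B} {π : A →⋆ₐ[ℂ] (H →L[ℂ] H)}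

lemma map_mul_mul_of_restrict (hF : IsCompletelyPositive F) (hres : ∀ a : A, F a = π a)
    (a c : A) (x : B) : F (a * x * c) = π a * F x * π c := by
  have h1 : F 1 = 1 := by simpa using hres 1
  have hstar (a : A) : F (star (a : B)) = π (star a) := hres (star a)
  rw [hF.map_mul_of_map_star_mul h1, hF.map_mul_of_map_mul_star h1, hres, hres]
  · simpa [hstar, hres] using hres (a * star a)
  · simpa [hstar, hres] using hres (star c * c)

lemma inner_apply_eq_inner_map_star_mul_mul (hF : IsCompletelyPositive F)
    (hres : ∀ a : A, F a = π a) (Ω : H) (a c : A) (x : B) :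
    ⟪π a Ω, F x (π c Ω)⟫_ℂ = ⟪Ω, F (star (a : B) * x * c) Ω⟫_ℂ := by
  rw [← StarMemClass.coe_star, hF.map_mul_mul_of_restrict hres, StarHomClass.map_star,
    ContinuousLinearMap.star_eq_adjoint, ← ContinuousLinearMap.adjoint_inner_right]
  rfl

end IsCompletelyPositive

end

theorem stmt11_general {B : Type*} [NormedRing B] [StarRing B]
    [NormedAlgebra ℂ B] [StarModule ℂ B]
    -- the α-regular subalgebra A
    (A : StarSubalgebra ℂ B)
    -- GNS representation of τ
    {Hτ : Type*} [NormedAddCommGroup Hτ] [InnerProductSpace ℂ Hτ] [CompleteSpace Hτ]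
    (πτ : ↥A →⋆ₐ[ℂ] (Hτ →L[ℂ] Hτ)) (Ωτ : Hτ)
    (hcycτ : (Submodule.span ℂ (Set.range fun a : ↥A => πτ a Ωτ)).topologicalClosure = ⊤)
    -- the two completely positive contractions F₁, F₂ : B → π_τ(A)''
    (F₁ F₂ : B →ₗ[ℂ] (Hτ →L[ℂ] Hτ))
    (hcp₁ : ∀ (n : ℕ) (b : Fin n → B) (ξ : Fin n → Hτ),
      0 ≤ (∑ i, ∑ j, (inner ℂ (ξ i) (F₁ (star (b i) * b j) (ξ j)) : ℂ)).re ∧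
      (∑ i, ∑ j, (inner ℂ (ξ i) (F₁ (star (b i) * b j) (ξ j)) : ℂ)).im = 0)
    (hcp₂ : ∀ (n : ℕ) (b : Fin n → B) (ξ : Fin n → Hτ),
      0 ≤ (∑ i, ∑ j, (inner ℂ (ξ i) (F₂ (star (b i) * b j) (ξ j)) : ℂ)).re ∧
      (∑ i, ∑ j, (inner ℂ (ξ i) (F₂ (star (b i) * b j) (ξ j)) : ℂ)).im = 0)
    -- both restrict to π_τ on A
    (hres₁ : ∀ a : ↥A, F₁ (a : B) = πτ a)
    (hres₂ : ∀ a : ↥A, F₂ (a : B) = πτ a)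
    -- τ̄ ∘ F₁ = τ̄ ∘ F₂
    (hbar : ∀ x : B, (inner ℂ Ωτ (F₁ x Ωτ) : ℂ) = (inner ℂ Ωτ (F₂ x Ωτ) : ℂ)) :
    F₁ = F₂ := by
  have cp₁ : IsCompletelyPositive F₁ := fun n b ξ =>
    Complex.nonneg_iff.mpr ⟨(hcp₁ n b ξ).1, (hcp₁ n b ξ).2.symm⟩
  have cp₂ : IsCompletelyPositive F₂ := fun n b ξ =>
    Complex.nonneg_iff.mpr ⟨(hcp₂ n b ξ).1, (hcp₂ n b ξ).2.symm⟩
  have hdense : Dense (Submodule.span ℂ (Set.range fun a : A => πτ a Ωτ) : Set Hτ) :=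
    Submodule.dense_iff_topologicalClosure_eq_top.mpr hcycτ
  refine LinearMap.ext fun x => sub_eq_zero.mp <|
    ContinuousLinearMap.eq_zero_of_forall_inner_apply_eq_zero hdense ?_
  rintro _ ⟨a, rfl⟩ _ ⟨c, rfl⟩
  rw [sub_apply, inner_sub_right, cp₁.inner_apply_eq_inner_map_star_mul_mul hres₁,
    cp₂.inner_apply_eq_inner_map_star_mul_mul hres₂, hbar, sub_self]

/-- Let `τ ∈ T_β(A)` and suppose `F₁, F₂ : B → π_τ(A)''` are completely
positive contractions with `F₁|_A = F₂|_A = π_τ` and `τ̄ ∘ F₁ = τ̄ ∘ F₂`.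
Then `F₁ = F₂`. -/
theorem stmt11 {B : Type*} [NormedRing B] [StarRing B] [CStarRing B]
    [NormedAlgebra ℂ B] [CompleteSpace B] [StarModule ℂ B]
    -- the flow
    (α : ℝ → (B →⋆ₐ[ℂ] B))
    (hα0 : α 0 = StarAlgHom.id ℂ B)
    (hαadd : ∀ s t : ℝ, (α (s + t)) = (α s).comp (α t))
    (hαcont : ∀ x : B, Continuous fun t => α t x)
    -- the α-regular subalgebra A
    (A : StarSubalgebra ℂ B) (hAclosed : IsClosed (A : Set B))
    (Nα : Set B)
    (hNα : Nα = {b : B | (∃ F : ℂ → B, Differentiable ℂ F ∧ ∀ t : ℝ, F (t : ℂ) = α t b) ∧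
      ∀ t : ℝ, ∀ x ∈ A, (α t b * x * star b ∈ A ∧ star b * x * α t b ∈ A)})
    (happrox : ∃ (ι : Type) (l : Filter ι) (e : ι → B), l.NeBot ∧ (∀ i, e i ∈ A) ∧
      ∀ x : B, Tendsto (fun i => e i * x) l (𝓝 x) ∧ Tendsto (fun i => x * e i) l (𝓝 x))
    (hAfix : ∀ t : ℝ, ∀ x ∈ A, α t x = x)
    (hgen : (Submodule.span ℂ Nα).topologicalClosure = ⊤)
    (β : ℝ)
    -- τ is an (α,β)-conformal trace state on A
    (τ : ↥A →L[ℂ] ℂ) (hτnorm : ‖τ‖ = 1)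
    (hτpos : ∀ x : ↥A, 0 ≤ (τ (star x * x)).re ∧ (τ (star x * x)).im = 0)
    (hτtrace : ∀ x y : ↥A, τ (x * y) = τ (y * x))
    (hconf : ∀ b ∈ Nα, ∀ F : ℂ → B, Differentiable ℂ F → (∀ t : ℝ, F (t : ℂ) = α t b) →
      ∀ a c : ↥A,
      ∀ (h₁ : b * (a : B) * star b * (c : B) ∈ A)
        (h₂ : (a : B) * star b * (c : B) * F (Complex.I * β) ∈ A),
        τ ⟨b * (a : B) * star b * (c : B), h₁⟩ =
          τ ⟨(a : B) * star b * (c : B) * F (Complex.I * β), h₂⟩)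
    -- GNS representation of τ
    {Hτ : Type*} [NormedAddCommGroup Hτ] [InnerProductSpace ℂ Hτ] [CompleteSpace Hτ]
    (πτ : ↥A →⋆ₐ[ℂ] (Hτ →L[ℂ] Hτ)) (Ωτ : Hτ)
    (hGNSτ : ∀ a : ↥A, (inner ℂ Ωτ (πτ a Ωτ) : ℂ) = τ a)
    (hcycτ : (Submodule.span ℂ (Set.range fun a : ↥A => πτ a Ωτ)).topologicalClosure = ⊤)
    -- the two completely positive contractions F₁, F₂ : B → π_τ(A)''
    (F₁ F₂ : B →ₗ[ℂ] (Hτ →L[ℂ] Hτ))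
    (hrange₁ : ∀ x : B, F₁ x ∈ opCommutant (opCommutant (Set.range πτ)))
    (hrange₂ : ∀ x : B, F₂ x ∈ opCommutant (opCommutant (Set.range πτ)))
    (hcontr₁ : ∀ x : B, ‖F₁ x‖ ≤ ‖x‖) (hcontr₂ : ∀ x : B, ‖F₂ x‖ ≤ ‖x‖)
    (hcp₁ : ∀ (n : ℕ) (b : Fin n → B) (ξ : Fin n → Hτ),
      0 ≤ (∑ i, ∑ j, (inner ℂ (ξ i) (F₁ (star (b i) * b j) (ξ j)) : ℂ)).re ∧
      (∑ i, ∑ j, (inner ℂ (ξ i) (F₁ (star (b i) * b j) (ξ j)) : ℂ)).im = 0)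
    (hcp₂ : ∀ (n : ℕ) (b : Fin n → B) (ξ : Fin n → Hτ),
      0 ≤ (∑ i, ∑ j, (inner ℂ (ξ i) (F₂ (star (b i) * b j) (ξ j)) : ℂ)).re ∧
      (∑ i, ∑ j, (inner ℂ (ξ i) (F₂ (star (b i) * b j) (ξ j)) : ℂ)).im = 0)
    -- both restrict to π_τ on A
    (hres₁ : ∀ a : ↥A, F₁ (a : B) = πτ a)
    (hres₂ : ∀ a : ↥A, F₂ (a : B) = πτ a)
    -- τ̄ ∘ F₁ = τ̄ ∘ F₂
    (hbar : ∀ x : B, (inner ℂ Ωτ (F₁ x Ωτ) : ℂ) = (inner ℂ Ωτ (F₂ x Ωτ) : ℂ)) :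
    F₁ = F₂ :=
  stmt11_general A πτ Ωτ hcycτ F₁ F₂ hcp₁ hcp₂ hres₁ hres₂ hbar
end

section
/- Let ω be a state on a C*-algebra B with GNS representation (H_ω, π_ω, Ω_ω), and let b ∈ B be such that the one-parameter group α fixes bb*, i.e. α_t(b)α_t(b)* = bb* for all t, and z ↦ α_z(b) is entire. Let P be the range projection of π_ω(b) in π_ω(B)''. Then P π_ω(α_z(b)) = π_ω(α_z(b)) for all z ∈ ℂ; in particular P π_ω(α_{iβ}(b)) = π_ω(α_{iβ}(b)). -/
/-!
For real `t` the operator `T = π(α_t b)` satisfies `T T* = π(b b*) = S S*` with `S = π b`, and in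
any C⋆-ring `‖q T‖² = ‖q T T* q*‖ = ‖q S S* q*‖ = ‖q S‖²`; taking `q = P - 1` gives `P T = T`.
Thus the entire operator-valued functions `z ↦ P π(α_z b)` and `z ↦ π(α_z b)` agree on `ℝ`,
hence everywhere by the identity theorem.
-/

open scoped CStarAlgebra
open Filter Topology

theorem CStarRing.mul_eq_right_of_mul_star_eq {R : Type*} [NormedRing R] [StarRing R]
    [CStarRing R] {p s t : R} (hts : t * star t = s * star s) (hps : p * s = s) :
    p * t = t := by
  have hs : (p - 1) * s = 0 := by rw [sub_mul, one_mul, hps, sub_self]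
  have hnorm : ‖(p - 1) * t‖ * ‖(p - 1) * t‖ = ‖(p - 1) * s‖ * ‖(p - 1) * s‖ := by
    simp only [← CStarRing.norm_self_mul_star, star_mul, ← mul_assoc, mul_assoc _ t, hts]
  rw [hs, norm_zero, mul_zero, mul_self_eq_zero, norm_eq_zero, sub_mul, one_mul,
    sub_eq_zero] at hnorm
  exact hnorm

theorem ContinuousLinearMap.mul_eq_right_of_range_subset {R M : Type*} [Semiring R]
    [TopologicalSpace M] [AddCommMonoid M] [Module R M] {P S : M →L[R] M}
    (hP : IsIdempotentElem P) (hS : Set.range S ⊆ Set.range P) : P * S = S := by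
  ext x
  obtain ⟨y, hy⟩ := hS ⟨x, rfl⟩
  change P (S x) = S x
  rw [← hy]
  exact DFunLike.congr_fun hP.eq y

theorem Differentiable.eq_of_forall_ofReal_eq {E : Type*} [NormedAddCommGroup E]
    [NormedSpace ℂ E] [CompleteSpace E] {f g : ℂ → E} (hf : Differentiable ℂ f)
    (hg : Differentiable ℂ g) (hfg : ∀ t : ℝ, f t = g t) : f = g := by
  have hreal : Tendsto ((↑) : ℝ → ℂ) (𝓝[≠] 0) (𝓝[≠] 0) :=
    Complex.continuous_ofReal.continuousWithinAt.tendsto_nhdsWithin fun t ht ↦ by simpa using ht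
  have hfreq : ∃ᶠ z in 𝓝[≠] (0 : ℂ), f z = g z :=
    hreal.frequently (Frequently.of_forall hfg)
  funext z
  exact (Complex.analyticOnNhd_univ_iff_differentiable.2 hf).eqOn_of_preconnected_of_frequently_eq
    (Complex.analyticOnNhd_univ_iff_differentiable.2 hg) isPreconnected_univ
    (Set.mem_univ 0) hfreq (Set.mem_univ z)

theorem stmt16_general {B : Type*} [NormedRing B] [StarRing B] [CStarRing B]
    [NormedAlgebra ℂ B] [CompleteSpace B] [StarModule ℂ B]
    -- the flow
    (α : ℝ → (B →⋆ₐ[ℂ] B))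
    {H : Type*} [NormedAddCommGroup H] [InnerProductSpace ℂ H] [CompleteSpace H]
    (π : B →⋆ₐ[ℂ] (H →L[ℂ] H))
    -- b with α_t(b) α_t(b)* = b b* and entire extension F of t ↦ α_t(b)
    (b : B)
    (hbb : ∀ t : ℝ, α t b * star (α t b) = b * star b)
    (F : ℂ → B) (hF : Differentiable ℂ F) (hFR : ∀ t : ℝ, F (t : ℂ) = α t b)
    -- P is the range projection of π_ω(b)
    (P : H →L[ℂ] H)
    (hPidem : P * P = P)
    (hPrange : Set.range P = closure (Set.range fun ξ : H => π b ξ)) :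
    ∀ z : ℂ, P * π (F z) = π (F z) := by
  -- ⋆-homomorphisms between C⋆-algebras are contractive, so this instance makes `π` continuous
  let _ : CStarAlgebra B := { }
  have hPb : P * π b = π b :=
    ContinuousLinearMap.mul_eq_right_of_range_subset hPidem (hPrange ▸ subset_closure)
  have hreal (t : ℝ) : P * π (F t) = π (F t) := by
    refine CStarRing.mul_eq_right_of_mul_star_eq ?_ hPb
    rw [← map_star, ← map_star, ← map_mul, ← map_mul, hFR, hbb]
  have hπF : Differentiable ℂ fun z ↦ π (F z) :=
    (ContinuousLinearMap.mk (π : B →ₗ[ℂ] H →L[ℂ] H) (map_continuous π)).differentiable.comp hF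
  exact congrFun ((hπF.const_mul P).eq_of_forall_ofReal_eq hπF hreal)

/-- Let `ω` be a state on a C*-algebra `B` with GNS representation
`(H_ω, π_ω, Ω_ω)`, and let `b ∈ B` be such that the flow `α` fixes `b b*`,
i.e. `α_t(b) α_t(b)* = b b*` for all `t`, and `z ↦ α_z(b)` is entire (extension `F`).
Let `P` be the range projection of `π_ω(b)` in `π_ω(B)''`.  Then
`P π_ω(α_z(b)) = π_ω(α_z(b))` for all `z ∈ ℂ`; in particular for `z = iβ`. -/
theorem stmt16 {B : Type*} [NormedRing B] [StarRing B] [CStarRing B]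
    [NormedAlgebra ℂ B] [CompleteSpace B] [StarModule ℂ B]
    -- the flow
    (α : ℝ → (B →⋆ₐ[ℂ] B))
    (hα0 : α 0 = StarAlgHom.id ℂ B)
    (hαadd : ∀ s t : ℝ, (α (s + t)) = (α s).comp (α t))
    (hαcont : ∀ x : B, Continuous fun t => α t x)
    -- the state ω and its GNS representation
    (ω : B →L[ℂ] ℂ) (hωnorm : ‖ω‖ = 1)
    (hωpos : ∀ x : B, 0 ≤ (ω (star x * x)).re ∧ (ω (star x * x)).im = 0)
    {H : Type*} [NormedAddCommGroup H] [InnerProductSpace ℂ H] [CompleteSpace H]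
    (π : B →⋆ₐ[ℂ] (H →L[ℂ] H)) (Ω : H)
    (hGNS : ∀ x : B, (inner ℂ Ω (π x Ω) : ℂ) = ω x)
    (hcyc : (Submodule.span ℂ (Set.range fun x : B => π x Ω)).topologicalClosure = ⊤)
    -- b with α_t(b) α_t(b)* = b b* and entire extension F of t ↦ α_t(b)
    (b : B)
    (hbb : ∀ t : ℝ, α t b * star (α t b) = b * star b)
    (F : ℂ → B) (hF : Differentiable ℂ F) (hFR : ∀ t : ℝ, F (t : ℂ) = α t b)
    -- P is the range projection of π_ω(b)
    (P : H →L[ℂ] H)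
    (hPidem : P * P = P) (hPsa : IsSelfAdjoint P)
    (hPrange : Set.range P = closure (Set.range fun ξ : H => π b ξ)) :
    ∀ z : ℂ, P * π (F z) = π (F z) :=
  stmt16_general α π b hbb F hF hFR P hPidem hPrange
end

section
/- Let G be a discrete abelian group, H ⊆ G a subgroup, τ a state on a C*-algebra A with GNS data (H_τ, π_τ, Ω_τ), w a unitary representation of H in π_τ(A)'', and ξ, ξ' characters of H. If the states ω, ω' on the crossed product determined by ω(a u_g) = ξ(g) τ̄(π_τ(a) w_g) for g ∈ H and 0 otherwise (and similarly ω' with ξ'), agree, and if for each h ∈ H there is a sequence a_n ∈ A with π_τ(a_n) → w_h* strongly, then ξ = ξ'. -/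
/-! Testing the agreement of the two states against `π(aₙ) w_h` with `π(aₙ) → w_h*` strongly
produces coefficients `⟪Ω, π(aₙ) w_h Ω⟫ → ⟪Ω, w_h* w_h Ω⟫ = ‖Ω‖² ≠ 0`, so `ξ(h)` and `ξ'(h)`
can be cancelled against one of them. -/

open Filter Topology

theorem eq_of_mul_eq_mul_of_tendsto {ι M₀ : Type*} [MonoidWithZero M₀] [IsRightCancelMulZero M₀]
    [TopologicalSpace M₀] [T1Space M₀] {l : Filter ι} [l.NeBot] {c : ι → M₀} {c₀ : M₀}
    (hc : Tendsto c l (𝓝 c₀)) (hc₀ : c₀ ≠ 0) {z z' : M₀} (h : ∀ i, z * c i = z' * c i) :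
    z = z' :=
  have ⟨i, hi⟩ := (hc.eventually_ne hc₀).exists
  mul_right_cancel₀ hi (h i)

theorem tendsto_inner_mul_apply_of_tendsto_star {ι 𝕜 E : Type*} [RCLike 𝕜]
    [NormedAddCommGroup E] [InnerProductSpace 𝕜 E] [CompleteSpace E] {l : Filter ι}
    {T : ι → E →L[𝕜] E} {u : E →L[𝕜] E} (hu : star u * u = 1) {y : E}
    (hT : Tendsto (fun i => T i (u y)) l (𝓝 (star u (u y)))) :
    Tendsto (fun i => inner 𝕜 y ((T i * u) y)) l (𝓝 (inner 𝕜 y y)) := by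
  have hy : star u (u y) = y := by
    simpa using congrArg (fun S : E →L[𝕜] E => S y) hu
  rw [hy] at hT
  exact tendsto_const_nhds.inner hT

theorem stmt19_general {G : Type*} [CommGroup G] (H : Subgroup G)
    {A : Type*} [NormedRing A] [StarRing A]
    [NormedAlgebra ℂ A]
    {Hτ : Type*} [NormedAddCommGroup Hτ] [InnerProductSpace ℂ Hτ] [CompleteSpace Hτ]
    (π : A →⋆ₐ[ℂ] (Hτ →L[ℂ] Hτ)) (Ω : Hτ)
    (hΩ : ‖Ω‖ = 1)
    -- w a unitary representation of H in π_τ(A)''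
    (w : H → (Hτ →L[ℂ] Hτ))
    (hwunit : ∀ h : H, star (w h) * w h = 1 ∧ w h * star (w h) = 1)
    -- ξ, ξ' characters of H
    (ξ ξ' : H → ℂ)
    -- agreement of the two states determined by ξ and ξ' (their values on the spanning
    -- elements a u_g: zero off H, and ξ(g) τ̄(π_τ(a) w_g) for g ∈ H)
    (hagree : ∀ (h : H) (a : A),
      ξ h * (inner ℂ Ω ((π a * w h) Ω) : ℂ) = ξ' h * (inner ℂ Ω ((π a * w h) Ω) : ℂ))
    -- strong approximation of w_h* from π_τ(A)
    (happrox : ∀ h : H, ∃ a : ℕ → A,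
      ∀ x : Hτ, Tendsto (fun n => π (a n) x) atTop (𝓝 (star (w h) x))) :
    ξ = ξ' := by
  funext h
  obtain ⟨a, ha⟩ := happrox h
  have hΩ₀ : Ω ≠ 0 := norm_ne_zero_iff.mp (hΩ ▸ one_ne_zero)
  have hlim := tendsto_inner_mul_apply_of_tendsto_star (T := fun n => π (a n)) (hwunit h).1
    (ha (w h Ω))
  exact eq_of_mul_eq_mul_of_tendsto hlim (inner_self_ne_zero.mpr hΩ₀) fun n => hagree h (a n)

/-- Let `G` be a discrete abelian group, `H ⊆ G` a subgroup, `τ` a state on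
a C*-algebra `A` with GNS data `(H_τ, π_τ, Ω_τ)`, `w` a unitary representation of `H` in
`π_τ(A)''`, and `ξ, ξ'` characters of `H`.  If the states on the crossed product
determined by `ω(a u_g) = ξ(g) τ̄(π_τ(a) w_g)` for `g ∈ H` (and `0` otherwise), and
similarly with `ξ'`, agree, and if for each `h ∈ H` there is a sequence `aₙ ∈ A` with
`π_τ(aₙ) → w_h*` strongly, then `ξ = ξ'`. -/
theorem stmt19 {G : Type*} [CommGroup G] (H : Subgroup G)
    {A : Type*} [NormedRing A] [StarRing A] [CStarRing A]
    [NormedAlgebra ℂ A] [CompleteSpace A] [StarModule ℂ A]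
    -- τ a state on A with GNS data
    (τ : A →L[ℂ] ℂ) (hτ1 : τ 1 = 1)
    (hτpos : ∀ x : A, 0 ≤ (τ (star x * x)).re ∧ (τ (star x * x)).im = 0)
    {Hτ : Type*} [NormedAddCommGroup Hτ] [InnerProductSpace ℂ Hτ] [CompleteSpace Hτ]
    (π : A →⋆ₐ[ℂ] (Hτ →L[ℂ] Hτ)) (Ω : Hτ)
    (hΩ : ‖Ω‖ = 1)
    (hGNS : ∀ a : A, (inner ℂ Ω (π a Ω) : ℂ) = τ a)
    (hcyc : (Submodule.span ℂ (Set.range fun a : A => π a Ω)).topologicalClosure = ⊤)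
    -- w a unitary representation of H in π_τ(A)''
    (w : H → (Hτ →L[ℂ] Hτ))
    (hwmem : ∀ h : H, w h ∈ opCommutant (opCommutant (Set.range π)))
    (hwunit : ∀ h : H, star (w h) * w h = 1 ∧ w h * star (w h) = 1)
    (hwrep : ∀ h₁ h₂ : H, w (h₁ * h₂) = w h₁ * w h₂)
    -- ξ, ξ' characters of H
    (ξ ξ' : H → ℂ)
    (hξabs : ∀ h : H, ‖ξ h‖ = 1)
    (hξmul : ∀ h₁ h₂ : H, ξ (h₁ * h₂) = ξ h₁ * ξ h₂)
    (hξ'abs : ∀ h : H, ‖ξ' h‖ = 1)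
    (hξ'mul : ∀ h₁ h₂ : H, ξ' (h₁ * h₂) = ξ' h₁ * ξ' h₂)
    -- agreement of the two states determined by ξ and ξ' (their values on the spanning
    -- elements a u_g: zero off H, and ξ(g) τ̄(π_τ(a) w_g) for g ∈ H)
    (hagree : ∀ (h : H) (a : A),
      ξ h * (inner ℂ Ω ((π a * w h) Ω) : ℂ) = ξ' h * (inner ℂ Ω ((π a * w h) Ω) : ℂ))
    -- strong approximation of w_h* from π_τ(A)
    (happrox : ∀ h : H, ∃ a : ℕ → A,
      ∀ x : Hτ, Tendsto (fun n => π (a n) x) atTop (𝓝 (star (w h) x))) :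
    ξ = ξ' :=
  stmt19_general H π Ω hΩ w hwunit ξ ξ' hagree happrox
end
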